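/- arXiv:1801.07058 — 4 statements merged into one kernel-verified Lean document; each statement's English description precedes it below -/
import Mathlib

section
/- With P₂ and P₃ as defined from path integrals along t ↦ tx, the composition vanishes: P₂(P₃ v) = 0 for every smooth vector field v on ℝ³. -/
open MeasureTheory

noncomputable section
set_option maxHeartbeats 2000000

abbrev V3 : Type := Fin 3 → ℝ
abbrev M33 : Type := Fin 3 → Fin 3 → ℝ

/-- Levi-Civita symbol on `Fin 3`. -/
def lc (i j k : Fin 3) : ℝ :=
  (((i : ℕ) : ℝ) - ((j : ℕ) : ℝ)) * (((j : ℕ) : ℝ) - ((k : ℕ) : ℝ)) *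
    (((k : ℕ) : ℝ) - ((i : ℕ) : ℝ)) / 2

/-- Partial derivative in the `i`-th coordinate direction. -/
def pd (i : Fin 3) (f : V3 → ℝ) (x : V3) : ℝ :=
  fderiv ℝ f x (Pi.single i 1)

/-- Cross product of vectors in `ℝ³`. -/
def cross (u v : V3) : V3 := fun i => ∑ a, ∑ b, lc i a b * u a * v b

/-- Outer (tensor) product `u ⊗ v`. -/
def outer (u v : V3) : M33 := fun i j => u i * v j

/-- Matrix-vector product `A · v`. -/
def mulVec3 (A : M33) (v : V3) : V3 := fun i => ∑ j, A i j * v j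

/-- Column-wise cross product `u ∧ A`. -/
def colCross (u : V3) (A : M33) : M33 := fun i j => ∑ a, ∑ b, lc i a b * u a * A b j

/-- Row-wise cross product `A ∧ u`. -/
def rowCross (A : M33) (u : V3) : M33 := fun i j => ∑ a, ∑ b, lc j a b * A i a * u b

/-- Symmetric part of a matrix. -/
def symm3 (A : M33) : M33 := fun i j => (A i j + A j i) / 2

/-- Column-wise curl `∇ × F` of a matrix field: `(∇×F)_{ij} = ε_{iab} ∂_a F_{bj}`. -/
def colCurl (F : V3 → M33) (x : V3) : M33 :=
  fun i j => ∑ a, ∑ b, lc i a b * pd a (fun y => F y b j) x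

/-- Row-wise curl `F × ∇` of a matrix field: `(F×∇)_{ij} = ε_{jab} ∂_a F_{ib}`. -/
def rowCurl (F : V3 → M33) (x : V3) : M33 :=
  fun i j => ∑ a, ∑ b, lc j a b * pd a (fun y => F y i b) x

/-- Row-wise divergence of a matrix field: `(div F)_i = ∂_j F_{ij}`. -/
def divM (F : V3 → M33) (x : V3) : V3 := fun i => ∑ j, pd j (fun y => F y i j) x

/-- Divergence of a vector field. -/
def divV (u : V3 → V3) (x : V3) : ℝ := ∑ j, pd j (fun y => u y j) x

/-- Symmetric gradient (linearized strain) `def u`. -/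
def defo (u : V3 → V3) (x : V3) : M33 :=
  fun i j => (pd i (fun y => u y j) x + pd j (fun y => u y i) x) / 2

/-- Incompatibility operator `inc E = ∇ × E × ∇`:
`(inc E)_{ij} = ε_{ist} ε_{jlm} ∂_s ∂_l E_{tm}`. -/
def inc3 (F : V3 → M33) (x : V3) : M33 :=
  fun i j => ∑ s, ∑ t, ∑ l, ∑ m,
    lc i s t * lc j l m * pd s (fun y => pd l (fun z => F z t m) y) x

/-- The vector `w` associated with the skew-symmetric matrix `Skw w`. -/
def vecOf (A : M33) : V3 := ![A 2 1, A 0 2, A 1 0]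

/-- Smoothness of a matrix field, componentwise. -/
def SmoothM (F : V3 → M33) : Prop := ∀ i j, ContDiff ℝ (⊤ : ℕ∞) fun x => F x i j

/-- Smoothness of a vector field, componentwise. -/
def SmoothV (u : V3 → V3) : Prop := ∀ i, ContDiff ℝ (⊤ : ℕ∞) fun x => u x i

/-- Pointwise symmetry of a matrix field. -/
def SymM (F : V3 → M33) : Prop := ∀ x i j, F x i j = F x j i

/-- The first Poincaré operator (Cesàro–Volterra path integral along `t ↦ t x`). -/
def P1 (E : V3 → M33) (x : V3) : V3 := fun i =>
  (∫ t in (0:ℝ)..1, mulVec3 (E (t • x)) x i) +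
    ∫ t in (0:ℝ)..1, (1 - t) * mulVec3 (colCross x (colCurl E (t • x))) x i

/-- The second Poincaré operator `P₂ V = x ∧ (∫₀¹ t(1-t) V(tx) dt) ∧ x`. -/
def P2 (Vf : V3 → M33) (x : V3) : M33 :=
  colCross x (rowCross (fun i j => ∫ t in (0:ℝ)..1, t * (1 - t) * Vf (t • x) i j) x)

/-- The third Poincaré operator. -/
def P3 (v : V3 → V3) (x : V3) : M33 :=
  symm3 (fun i j =>
    (∫ t in (0:ℝ)..1, t ^ 2 * outer x (v (t • x)) i j) -
      rowCurl (fun p i' j' =>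
        ∫ t in (0:ℝ)..1, t ^ 2 * (1 - t) * outer p (cross (v (t • p)) p) i' j') x i j)

namespace CV
open intervalIntegral


def Psi (w : ℝ → ℝ) (g : V3 → ℝ) (y : V3) : ℝ := ∫ t in (0:ℝ)..1, w t * g (t • y)

variable {w : ℝ → ℝ} {g : V3 → ℝ}

lemma psi_cont (hw : Continuous w) (hg : ContDiff ℝ (⊤ : ℕ∞) g) : Continuous (Psi w g) := by
  exact continuous_parametric_intervalIntegral_of_continuous' (μ := volume)
    (f := fun y t => w t * g (t • y))
    ((hw.comp continuous_snd).mul (hg.continuous.comp (continuous_snd.smul continuous_fst))) 0 1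

lemma psi_integrand_cont (hw : Continuous w) (hg : ContDiff ℝ (⊤ : ℕ∞) g) (p : V3) :
    Continuous (fun t => w t * g (t • p)) :=
  hw.mul (hg.continuous.comp (continuous_id.smul continuous_const))

lemma psi_intervalIntegrable (hw : Continuous w) (hg : ContDiff ℝ (⊤ : ℕ∞) g) (p : V3) :
    IntervalIntegrable (fun t => w t * g (t • p)) volume 0 1 :=
  (psi_integrand_cont hw hg p).intervalIntegrable _ _

lemma fderiv_ray_cont (hw : Continuous w) (hg : ContDiff ℝ (⊤ : ℕ∞) g) (y : V3) :
    Continuous (fun t : ℝ => (w t * t) • fderiv ℝ g (t • y)) :=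
  (hw.mul continuous_id).smul
    (((hg.fderiv_right (m := (⊤ : ℕ∞)) (by simp)).continuous).comp (continuous_id.smul continuous_const))

set_option maxHeartbeats 1000000 in
lemma psi_hasFDerivAt (hw : Continuous w) (hg : ContDiff ℝ (⊤ : ℕ∞) g) (y₀ : V3) :
    HasFDerivAt (Psi w g)
      (∫ t in (0:ℝ)..1, (w t * t) • fderiv ℝ g (t • y₀)) y₀ := by
  have hfc : Continuous (fderiv ℝ g) := (hg.fderiv_right (m := (⊤ : ℕ∞)) (by simp)).continuous
  have hgc : Continuous g := hg.continuous
  have hfd : Continuous (fun p : ℝ × V3 => (w p.1 * p.1) • fderiv ℝ g (p.1 • p.2)) :=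
    ((hw.comp continuous_fst).mul continuous_fst).smul
      (hfc.comp (continuous_fst.smul continuous_snd))
  have hcmp : IsCompact ((Set.Icc (0:ℝ) 1) ×ˢ Metric.closedBall y₀ 1) :=
    isCompact_Icc.prod (isCompact_closedBall _ _)
  obtain ⟨C, hC⟩ := hcmp.exists_bound_of_continuousOn hfd.continuousOn
  have key := intervalIntegral.hasFDerivAt_integral_of_dominated_of_fderiv_le
    (μ := volume) (a := (0:ℝ)) (b := 1)
    (F := fun y t => w t * g (t • y)) (F' := fun y t => (w t * t) • fderiv ℝ g (t • y))
    (x₀ := y₀) (bound := fun _ => C) (s := Metric.ball y₀ 1) (Metric.ball_mem_nhds y₀ one_pos)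
    (Filter.Eventually.of_forall fun y => (psi_integrand_cont hw hg y).aestronglyMeasurable)
    ((psi_intervalIntegrable hw hg y₀))
    ((fderiv_ray_cont hw hg y₀).aestronglyMeasurable)
    ?_ intervalIntegrable_const ?_
  · exact key
  · refine Filter.Eventually.of_forall fun t ht y hy => ?_
    rw [Set.uIoc_of_le (by norm_num : (0:ℝ) ≤ 1)] at ht
    exact hC (t, y) ⟨⟨le_of_lt ht.1, ht.2⟩, Metric.ball_subset_closedBall hy⟩
  · refine Filter.Eventually.of_forall fun t ht y hy => ?_
    have hsm : HasFDerivAt (fun y : V3 => t • y) (t • ContinuousLinearMap.id ℝ V3) y := by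
      simpa using (t • ContinuousLinearMap.id ℝ V3).hasFDerivAt (x := y)
    have hgd : HasFDerivAt g (fderiv ℝ g (t • y)) (t • y) :=
      ((hg.differentiable (by simp)) (t • y)).hasFDerivAt
    have h2 := (hgd.comp y hsm).const_mul (w t)
    refine h2.congr_fderiv ?_
    ext z
    simp
    ring

lemma pd_smooth (hg : ContDiff ℝ (⊤ : ℕ∞) g) (d : Fin 3) : ContDiff ℝ (⊤ : ℕ∞) (fun y => pd d g y) := by
  have : (fun y => pd d g y)
      = fun y => (ContinuousLinearMap.apply ℝ ℝ (Pi.single d 1 : V3)) (fderiv ℝ g y) := rfl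
  rw [this]
  exact (ContinuousLinearMap.apply ℝ ℝ (Pi.single d 1 : V3)).contDiff.comp
    (hg.fderiv_right (m := (⊤ : ℕ∞)) (by simp))

lemma pd_psi (hw : Continuous w) (hg : ContDiff ℝ (⊤ : ℕ∞) g) (d : Fin 3) (y : V3) :
    pd d (Psi w g) y = Psi (fun t => w t * t) (fun z => pd d g z) y := by
  have h := psi_hasFDerivAt hw hg y
  rw [pd, h.fderiv]
  rw [ContinuousLinearMap.intervalIntegral_apply
    ((fderiv_ray_cont hw hg y).intervalIntegrable _ _)]
  rfl

lemma pd_psi_cont (hw : Continuous w) (hg : ContDiff ℝ (⊤ : ℕ∞) g) (d : Fin 3) :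
    Continuous (fun y => pd d (Psi w g) y) := by
  have : (fun y => pd d (Psi w g) y) = Psi (fun t => w t * t) (fun z => pd d g z) := by
    funext y; exact pd_psi hw hg d y
  rw [this]
  exact psi_cont (hw.mul continuous_id) (pd_smooth hg d)


variable (v : V3 → V3)

def Phi1 (c : Fin 3) : V3 → ℝ := Psi (fun t => t ^ 2) (fun y => v y c)
def Phi2 (c : Fin 3) : V3 → ℝ := Psi (fun t => t ^ 2 * (1 - t)) (fun y => v y c)
def hh (e : Fin 3) : V3 → ℝ := fun p => ∑ f, ∑ g2, lc e f g2 * Phi2 v f p * p g2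
def DPhi2 (f : Fin 3) (y : V3) : V3 →L[ℝ] ℝ :=
  ∫ t in (0:ℝ)..1, ((t ^ 2 * (1 - t)) * t) • fderiv ℝ (fun z => v z f) (t • y)

variable {v} (hv : SmoothV v)

lemma w1_cont : Continuous (fun t : ℝ => t ^ 2) := by fun_prop
lemma w2_cont : Continuous (fun t : ℝ => t ^ 2 * (1 - t)) := by fun_prop

include hv

lemma phi1_cont (c : Fin 3) : Continuous (Phi1 v c) := psi_cont w1_cont (hv c)
lemma phi2_cont (c : Fin 3) : Continuous (Phi2 v c) := psi_cont w2_cont (hv c)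

lemma hh_cont (e : Fin 3) : Continuous (hh v e) := by
  refine continuous_finset_sum _ fun f _ => continuous_finset_sum _ fun g2 _ => ?_
  exact (continuous_const.mul (phi2_cont hv f)).mul (continuous_apply g2)

omit hv in
lemma phi2_eq (f : Fin 3) (p : V3) :
    (∫ t in (0:ℝ)..1, t ^ 2 * (1 - t) * v (t • p) f) = Phi2 v f p := rfl

omit hv in
lemma phi2_integrand_cont (f : Fin 3) (p : V3) (hvf : ContDiff ℝ (⊤ : ℕ∞) fun x => v x f) :
    Continuous (fun t => t ^ 2 * (1 - t) * v (t • p) f) :=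
  psi_integrand_cont w2_cont hvf p

/-- pull out `p b` and identify the `h` integral. -/
lemma h_pull (p : V3) (b e : Fin 3) :
    (∫ t in (0:ℝ)..1, t ^ 2 * (1 - t) * outer p (cross (v (t • p)) p) b e)
      = p b * hh v e p := by
  have hint : ∀ f ∈ (Finset.univ : Finset (Fin 3)), IntervalIntegrable
      (fun t => ∑ g2, (lc e f g2 * p b * p g2) * (t ^ 2 * (1 - t) * v (t • p) f)) volume 0 1 :=
    fun f _ => (continuous_finset_sum _ fun g2 _ =>
      (continuous_const.mul (phi2_integrand_cont f p (hv f)))).intervalIntegrable _ _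
  have step1 : (fun t : ℝ => t ^ 2 * (1 - t) * outer p (cross (v (t • p)) p) b e)
      = fun t : ℝ => ∑ f, ∑ g2, (lc e f g2 * p b * p g2) *
          (t ^ 2 * (1 - t) * v (t • p) f) := by
    funext t
    simp only [outer, cross, Finset.mul_sum]
    refine Finset.sum_congr rfl fun f _ => Finset.sum_congr rfl fun g2 _ => ?_
    ring
  rw [step1, intervalIntegral.integral_finset_sum hint]
  have step2 : ∀ f : Fin 3, (∫ t in (0:ℝ)..1, ∑ g2, (lc e f g2 * p b * p g2) *
      (t ^ 2 * (1 - t) * v (t • p) f))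
      = ∑ g2, (lc e f g2 * p b * p g2) * Phi2 v f p := by
    intro f
    rw [intervalIntegral.integral_finset_sum
      (fun g2 _ => ((continuous_const.fun_mul (phi2_integrand_cont f p (hv f)))).intervalIntegrable _ _)]
    refine Finset.sum_congr rfl fun g2 _ => ?_
    rw [intervalIntegral.integral_const_mul, phi2_eq]
  simp only [step2, hh, Finset.mul_sum]
  refine Finset.sum_congr rfl fun f _ => Finset.sum_congr rfl fun g2 _ => ?_
  ring

lemma first_pull (y : V3) (b c : Fin 3) :
    (∫ t in (0:ℝ)..1, t ^ 2 * outer y (v (t • y)) b c) = y b * Phi1 v c y := by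
  have : (fun t : ℝ => t ^ 2 * outer y (v (t • y)) b c)
      = fun t : ℝ => y b * ((fun s => s ^ 2) t * (fun z => v z c) (t • y)) := by
    funext t; simp only [outer]; ring
  rw [this, intervalIntegral.integral_const_mul]
  rfl


lemma hh_hasFDerivAt (e : Fin 3) (y : V3) :
    HasFDerivAt (hh v e)
      (∑ f, ∑ g2, ((lc e f g2 * Phi2 v f y) • (ContinuousLinearMap.proj g2 : V3 →L[ℝ] ℝ)
          + y g2 • (lc e f g2 • DPhi2 v f y))) y := by
  apply HasFDerivAt.fun_sum
  intro f _
  apply HasFDerivAt.fun_sum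
  intro g2 _
  have h1 : HasFDerivAt (fun p : V3 => lc e f g2 * Phi2 v f p) (lc e f g2 • DPhi2 v f y) y :=
    (psi_hasFDerivAt w2_cont (hv f) y).const_mul _
  have h2 : HasFDerivAt (fun p : V3 => p g2) (ContinuousLinearMap.proj g2 : V3 →L[ℝ] ℝ) y :=
    (ContinuousLinearMap.proj g2 : V3 →L[ℝ] ℝ).hasFDerivAt
  exact h1.fun_mul h2

lemma hh_diff (e : Fin 3) (y : V3) : DifferentiableAt ℝ (hh v e) y :=
  (hh_hasFDerivAt hv e y).differentiableAt

lemma pd_hh (a e : Fin 3) (y : V3) :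
    pd a (hh v e) y = ∑ f, ∑ g2, (lc e f g2 * Phi2 v f y * ((Pi.single a 1 : V3) g2)
      + y g2 * (lc e f g2 * Psi (fun t => (t ^ 2 * (1 - t)) * t) (fun z => pd a (fun q => v q f) z) y)) := by
  rw [pd, (hh_hasFDerivAt hv e y).fderiv]
  rw [ContinuousLinearMap.sum_apply]
  refine Finset.sum_congr rfl fun f _ => ?_
  rw [ContinuousLinearMap.sum_apply]
  refine Finset.sum_congr rfl fun g2 _ => ?_
  have hD : (DPhi2 v f y) (Pi.single a 1)
      = Psi (fun t => (t ^ 2 * (1 - t)) * t) (fun z => pd a (fun q => v q f) z) y := by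
    have hc : Continuous (fun t : ℝ => ((t ^ 2 * (1 - t)) * t) • fderiv ℝ (fun z => v z f) (t • y)) :=
      (((w2_cont.mul continuous_id)).smul
        ((((hv f).fderiv_right (m := (⊤ : ℕ∞)) (by simp)).continuous).comp (continuous_id.smul continuous_const)))
    rw [DPhi2, ContinuousLinearMap.intervalIntegral_apply (hc.intervalIntegrable _ _)]
    rfl
  simp only [ContinuousLinearMap.add_apply, ContinuousLinearMap.smul_apply,
    ContinuousLinearMap.proj_apply, smul_eq_mul, hD]

lemma pd_hh_cont (a e : Fin 3) : Continuous (fun y => pd a (hh v e) y) := by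
  have : (fun y => pd a (hh v e) y) = fun y => ∑ f, ∑ g2, (lc e f g2 * Phi2 v f y * ((Pi.single a 1 : V3) g2)
      + y g2 * (lc e f g2 * Psi (fun t => (t ^ 2 * (1 - t)) * t) (fun z => pd a (fun q => v q f) z) y)) := by
    funext y; exact pd_hh hv a e y
  rw [this]
  refine continuous_finset_sum _ fun f _ => continuous_finset_sum _ fun g2 _ => ?_
  refine ((continuous_const.mul (phi2_cont hv f)).mul continuous_const).add
    ((continuous_apply g2).mul (continuous_const.mul ?_))
  exact psi_cont (w2_cont.mul continuous_id) (pd_smooth (hv f) a)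


variable (hv : SmoothV v)
include hv

lemma pd_mul_hh (a b e : Fin 3) (y : V3) :
    pd a (fun p => p b * hh v e p) y
      = y b * pd a (hh v e) y + hh v e y * (Pi.single a 1 : V3) b := by
  have h2 : HasFDerivAt (fun p : V3 => p b) (ContinuousLinearMap.proj b : V3 →L[ℝ] ℝ) y :=
    (ContinuousLinearMap.proj b : V3 →L[ℝ] ℝ).hasFDerivAt
  have h1 : HasFDerivAt (hh v e) (fderiv ℝ (hh v e) y) y := (hh_diff hv e y).hasFDerivAt
  have h3 := h2.fun_mul h1
  rw [pd, h3.fderiv]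
  simp only [ContinuousLinearMap.add_apply, ContinuousLinearMap.smul_apply,
    ContinuousLinearMap.proj_apply, smul_eq_mul]
  rfl

lemma P3_eq (y : V3) (b c : Fin 3) :
    P3 v y b c = ((y b * Phi1 v c y
        - ∑ a, ∑ e, lc c a e * (y b * pd a (hh v e) y + hh v e y * (Pi.single a 1 : V3) b))
      + (y c * Phi1 v b y
        - ∑ a, ∑ e, lc b a e * (y c * pd a (hh v e) y + hh v e y * (Pi.single a 1 : V3) c))) / 2 := by
  have hRC : ∀ b c : Fin 3, rowCurl (fun p i' j' =>
      ∫ t in (0:ℝ)..1, t ^ 2 * (1 - t) * outer p (cross (v (t • p)) p) i' j') y b c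
      = ∑ a, ∑ e, lc c a e * (y b * pd a (hh v e) y + hh v e y * (Pi.single a 1 : V3) b) := by
    intro b c
    unfold rowCurl
    refine Finset.sum_congr rfl fun a _ => Finset.sum_congr rfl fun e _ => ?_
    have hfn : (fun p => ∫ t in (0:ℝ)..1, t ^ 2 * (1 - t) * outer p (cross (v (t • p)) p) b e)
        = fun p => p b * hh v e p := funext fun p => h_pull hv p b e
    rw [hfn, pd_mul_hh hv a b e y]
  show ((_ - _) + (_ - _)) / 2 = _
  rw [hRC b c, hRC c b, first_pull hv y b c, first_pull hv y c b]

omit hv in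
lemma ray_cont (x : V3) {g : V3 → ℝ} (hg : Continuous g) : Continuous (fun t : ℝ => g (t • x)) :=
  hg.comp (continuous_id.smul continuous_const)

lemma J_decomp (x : V3) : ∃ F1 E : Fin 3 → ℝ, ∀ b c,
    (∫ t in (0:ℝ)..1, t * (1 - t) * P3 v (t • x) b c)
      = x b * F1 c + x c * F1 b
        + ∑ e, (-(1/2) * (lc c b e + lc b c e)) * (∑ f, ∑ g, (lc e f g * x g) * E f) := by
  classical
  set f1 : Fin 3 → ℝ → ℝ := fun c t => t ^ 2 * (1 - t) / 2 *
      (Phi1 v c (t • x) - ∑ a, ∑ e, lc c a e * pd a (hh v e) (t • x)) with hf1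
  set f2 : Fin 3 → ℝ → ℝ := fun e t => t * (1 - t) * hh v e (t • x) with hf2
  have hf1c : ∀ c, Continuous (f1 c) := by
    intro c
    apply Continuous.mul (by fun_prop)
    exact ((ray_cont x (phi1_cont hv c)).sub
      (continuous_finset_sum _ fun a _ => continuous_finset_sum _ fun e _ =>
        continuous_const.mul (ray_cont x (pd_hh_cont hv a e))))
  have hf2c : ∀ e, Continuous (f2 e) := fun e =>
    (by fun_prop : Continuous fun t : ℝ => t * (1 - t)).mul (ray_cont x (hh_cont hv e))
  have hE : ∀ e, (∫ t in (0:ℝ)..1, f2 e t)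
      = ∑ f, ∑ g, (lc e f g * x g) * (∫ t in (0:ℝ)..1, t * (1 - t) * t * Phi2 v f (t • x)) := by
    intro e
    have hptf2 : f2 e = fun t => ∑ f, ∑ g, (lc e f g * x g) *
        (t * (1 - t) * t * Phi2 v f (t • x)) := by
      funext t
      simp only [hf2, hh, Finset.mul_sum, Pi.smul_apply, smul_eq_mul]
      refine Finset.sum_congr rfl fun f _ => Finset.sum_congr rfl fun g _ => ?_
      ring
    have hcint : ∀ f g : Fin 3, IntervalIntegrable
        (fun t => (lc e f g * x g) * (t * (1 - t) * t * Phi2 v f (t • x))) MeasureTheory.volume 0 1 :=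
      fun f g => ((continuous_const.mul ((by fun_prop : Continuous fun t:ℝ => t*(1-t)*t).mul
        (ray_cont x (phi2_cont hv f))))).intervalIntegrable _ _
    rw [hptf2, intervalIntegral.integral_finset_sum (fun f _ =>
      (continuous_finset_sum _ fun g _ => ((continuous_const.fun_mul
        ((by fun_prop : Continuous fun t:ℝ => t*(1-t)*t).fun_mul
        (ray_cont x (phi2_cont hv f)))))).intervalIntegrable _ _)]
    refine Finset.sum_congr rfl fun f _ => ?_
    rw [intervalIntegral.integral_finset_sum (fun g _ => hcint f g)]
    exact Finset.sum_congr rfl fun g _ => intervalIntegral.integral_const_mul _ _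
  refine ⟨fun c => ∫ t in (0:ℝ)..1, f1 c t,
    fun f => ∫ t in (0:ℝ)..1, t * (1 - t) * t * Phi2 v f (t • x), ?_⟩
  intro b c
  have hpt : (fun t => t * (1 - t) * P3 v (t • x) b c)
      = fun t => x b * f1 c t + (x c * f1 b t
          + ∑ e, (-(1/2) * (lc c b e + lc b c e)) * f2 e t) := by
    funext t
    rw [P3_eq hv (t • x) b c]
    simp only [hf1, hf2, Fin.sum_univ_three, Pi.smul_apply, smul_eq_mul]
    fin_cases b <;> fin_cases c <;>
      (simp [lc, Pi.single_apply]; norm_num; ring)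
  show (∫ t in (0:ℝ)..1, t * (1 - t) * P3 v (t • x) b c)
      = x b * (∫ t in (0:ℝ)..1, f1 c t) + x c * (∫ t in (0:ℝ)..1, f1 b t)
        + ∑ e, (-(1/2) * (lc c b e + lc b c e)) *
            (∑ f, ∑ g, (lc e f g * x g) * (∫ t in (0:ℝ)..1, t * (1 - t) * t * Phi2 v f (t • x)))
  rw [hpt]
  rw [intervalIntegral.integral_add ((continuous_const.fun_mul (hf1c c)).intervalIntegrable _ _)
    (((continuous_const.fun_mul (hf1c b)).fun_add
      (continuous_finset_sum _ fun e _ => continuous_const.fun_mul (hf2c e))).intervalIntegrable _ _)]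
  rw [intervalIntegral.integral_add ((continuous_const.fun_mul (hf1c b)).intervalIntegrable _ _)
    ((continuous_finset_sum _ fun e _ => continuous_const.fun_mul (hf2c e)).intervalIntegrable _ _)]
  rw [intervalIntegral.integral_finset_sum
    (fun e _ => ((continuous_const.fun_mul (hf2c e)).intervalIntegrable _ _))]
  simp only [intervalIntegral.integral_const_mul, hE]
  ring

theorem stmt7' (x : V3) : P2 (P3 v) x = 0 := by
  obtain ⟨F1, E, hJ⟩ := J_decomp hv x
  funext i j
  show colCross x (rowCross _ x) i j = (0 : M33) i j
  simp only [P2, colCross, rowCross, Pi.zero_apply, hJ, Fin.sum_univ_three]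
  fin_cases i <;> fin_cases j <;> (norm_num [lc]; ring)


end CV

theorem stmt7 (v : V3 → V3) (hv : SmoothV v) (x : V3) :
    P2 (P3 v) x = 0 := CV.stmt7' hv x
end
end

section
/- With P₁(E)(x) = ∫₀¹ E(tx)·x dt + ∫₀¹ (1−t)(x × (∇×E)(tx))·x dt and P₂(V)(x) = x ∧ (∫₀¹ t(1−t)V(tx) dt) ∧ x, the composition vanishes: P₁(P₂ V) = 0 for every smooth symmetric-matrix field V on ℝ³. -/
open MeasureTheory

noncomputable section

section AuxStmt8

open MeasureTheory

def proj3 (p : Fin 3) : V3 →L[ℝ] ℝ := ContinuousLinearMap.proj p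

lemma pd_trip (y : V3) (a p r : Fin 3) {g : V3 → ℝ} (hg : DifferentiableAt ℝ g y) :
    pd a (fun z => z p * g z * z r) y =
      (Pi.single a 1 : V3) p * g y * y r + y p * pd a g y * y r + y p * g y * (Pi.single a 1 : V3) r := by
  have hp : HasFDerivAt (fun z : V3 => z p) (proj3 p) y := (proj3 p).hasFDerivAt
  have hr : HasFDerivAt (fun z : V3 => z r) (proj3 r) y := (proj3 r).hasFDerivAt
  have h := ((hp.mul hg.hasFDerivAt).mul hr).fderiv
  unfold pd
  rw [show (fun z => z p * g z * z r) = ((fun z => z p) * g * fun z => z r) from rfl, h]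
  simp [proj3, ContinuousLinearMap.add_apply, ContinuousLinearMap.smul_apply,
    ContinuousLinearMap.proj_apply, smul_eq_mul]
  ring

lemma pd_sum {ι : Type*} (s : Finset ι) (f : ι → V3 → ℝ) (a : Fin 3) (y : V3)
    (h : ∀ i ∈ s, DifferentiableAt ℝ (f i) y) :
    pd a (fun z => ∑ i ∈ s, f i z) y = ∑ i ∈ s, pd a (f i) y := by
  unfold pd
  rw [fderiv_fun_sum h]
  simp

lemma pd_const_mul (c : ℝ) {f : V3 → ℝ} (a : Fin 3) (y : V3) (hf : DifferentiableAt ℝ f y) :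
    pd a (fun z => c * f z) y = c * pd a f y := by
  unfold pd
  rw [fderiv_const_mul hf]
  simp

lemma pdE (N : V3 → M33) (y₀ : V3) (hN : ∀ i j, DifferentiableAt ℝ (fun y => N y i j) y₀)
    (b1 j a : Fin 3) :
    pd a (fun y => colCross y (rowCross (N y) y) b1 j) y₀ =
      ∑ p : Fin 3 × Fin 3 × Fin 3 × Fin 3, lc b1 p.1 p.2.1 * lc j p.2.2.1 p.2.2.2 *
        (((Pi.single a 1 : V3) p.1) * (N y₀ p.2.1 p.2.2.1) * (y₀ p.2.2.2)
          + (y₀ p.1) * (pd a (fun y => N y p.2.1 p.2.2.1) y₀) * (y₀ p.2.2.2)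
          + (y₀ p.1) * (N y₀ p.2.1 p.2.2.1) * ((Pi.single a 1 : V3) p.2.2.2)) := by
  have hE : (fun y => colCross y (rowCross (N y) y) b1 j) =
      (fun y => ∑ p : Fin 3 × Fin 3 × Fin 3 × Fin 3,
        lc b1 p.1 p.2.1 * lc j p.2.2.1 p.2.2.2 *
          ((y p.1) * (N y p.2.1 p.2.2.1) * (y p.2.2.2))) := by
    funext y
    simp only [colCross, rowCross, Fintype.sum_prod_type, Fin.sum_univ_three]
    ring
  have hdp : ∀ (q : Fin 3), DifferentiableAt ℝ (fun z : V3 => z q) y₀ :=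
    fun q => (proj3 q).differentiableAt
  rw [hE, pd_sum _ _ _ _
    (fun p _ => (((hdp p.1).mul (hN p.2.1 p.2.2.1)).mul (hdp p.2.2.2)).const_mul _)]
  refine Finset.sum_congr rfl fun p _ => ?_
  rw [pd_const_mul (f := fun z => z p.1 * N z p.2.1 p.2.2.1 * z p.2.2.2) _ _ _
      (((hdp p.1).mul (hN p.2.1 p.2.2.1)).mul (hdp p.2.2.2)),
    pd_trip _ _ _ _ (hN p.2.1 p.2.2.1)]

lemma lcv000 : lc 0 0 0 = 0 := by norm_num [lc]
lemma lcv001 : lc 0 0 1 = 0 := by norm_num [lc]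
lemma lcv002 : lc 0 0 2 = 0 := by norm_num [lc]
lemma lcv010 : lc 0 1 0 = 0 := by norm_num [lc]
lemma lcv011 : lc 0 1 1 = 0 := by norm_num [lc]
lemma lcv012 : lc 0 1 2 = 1 := by norm_num [lc]
lemma lcv020 : lc 0 2 0 = 0 := by norm_num [lc]
lemma lcv021 : lc 0 2 1 = -1 := by norm_num [lc]
lemma lcv022 : lc 0 2 2 = 0 := by norm_num [lc]
lemma lcv100 : lc 1 0 0 = 0 := by norm_num [lc]
lemma lcv101 : lc 1 0 1 = 0 := by norm_num [lc]
lemma lcv102 : lc 1 0 2 = -1 := by norm_num [lc]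
lemma lcv110 : lc 1 1 0 = 0 := by norm_num [lc]
lemma lcv111 : lc 1 1 1 = 0 := by norm_num [lc]
lemma lcv112 : lc 1 1 2 = 0 := by norm_num [lc]
lemma lcv120 : lc 1 2 0 = 1 := by norm_num [lc]
lemma lcv121 : lc 1 2 1 = 0 := by norm_num [lc]
lemma lcv122 : lc 1 2 2 = 0 := by norm_num [lc]
lemma lcv200 : lc 2 0 0 = 0 := by norm_num [lc]
lemma lcv201 : lc 2 0 1 = 1 := by norm_num [lc]
lemma lcv202 : lc 2 0 2 = 0 := by norm_num [lc]
lemma lcv210 : lc 2 1 0 = -1 := by norm_num [lc]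
lemma lcv211 : lc 2 1 1 = 0 := by norm_num [lc]
lemma lcv212 : lc 2 1 2 = 0 := by norm_num [lc]
lemma lcv220 : lc 2 2 0 = 0 := by norm_num [lc]
lemma lcv221 : lc 2 2 1 = 0 := by norm_num [lc]
lemma lcv222 : lc 2 2 2 = 0 := by norm_num [lc]
lemma spv00 : (Pi.single (0:Fin 3) 1 : V3) 0 = 1 := by simp [Pi.single_apply]
lemma spv01 : (Pi.single (0:Fin 3) 1 : V3) 1 = 0 := by simp [Pi.single_apply]
lemma spv02 : (Pi.single (0:Fin 3) 1 : V3) 2 = 0 := by simp [Pi.single_apply]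
lemma spv10 : (Pi.single (1:Fin 3) 1 : V3) 0 = 0 := by simp [Pi.single_apply]
lemma spv11 : (Pi.single (1:Fin 3) 1 : V3) 1 = 1 := by simp [Pi.single_apply]
lemma spv12 : (Pi.single (1:Fin 3) 1 : V3) 2 = 0 := by simp [Pi.single_apply]
lemma spv20 : (Pi.single (2:Fin 3) 1 : V3) 0 = 0 := by simp [Pi.single_apply]
lemma spv21 : (Pi.single (2:Fin 3) 1 : V3) 1 = 0 := by simp [Pi.single_apply]
lemma spv22 : (Pi.single (2:Fin 3) 1 : V3) 2 = 1 := by simp [Pi.single_apply]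

lemma key1 (N : V3 → M33) (x : V3) (t : ℝ) (i : Fin 3) :
    mulVec3 (colCross (t • x) (rowCross (N (t • x)) (t • x))) x i = 0 := by
  fin_cases i <;>
  · simp only [mulVec3, colCross, rowCross, Fin.sum_univ_three, Pi.smul_apply, smul_eq_mul,
      lcv000, lcv001, lcv002, lcv010, lcv011, lcv012, lcv020, lcv021, lcv022, lcv100, lcv101,
      lcv102, lcv110, lcv111, lcv112, lcv120, lcv121, lcv122, lcv200, lcv201, lcv202, lcv210,
      lcv211, lcv212, lcv220, lcv221, lcv222, mul_zero, zero_mul, add_zero, zero_add, mul_one,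
      one_mul, neg_mul, mul_neg, neg_neg]
    ring

set_option maxHeartbeats 1600000 in
lemma key2 (N : V3 → M33) (x : V3) (t : ℝ)
    (hN : ∀ i j, DifferentiableAt ℝ (fun y => N y i j) (t • x))
    (hs : ∀ i j, N (t • x) i j = N (t • x) j i) (i : Fin 3) :
    mulVec3 (colCross x (colCurl (fun y => colCross y (rowCross (N y) y)) (t • x))) x i = 0 := by
  have hcurl : colCurl (fun y => colCross y (rowCross (N y) y)) (t • x) =
      fun b j => ∑ a1 : Fin 3, ∑ b1 : Fin 3, lc b a1 b1 *
        (∑ p : Fin 3 × Fin 3 × Fin 3 × Fin 3, lc b1 p.1 p.2.1 * lc j p.2.2.1 p.2.2.2 *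
          (((Pi.single a1 1 : V3) p.1) * (N (t • x) p.2.1 p.2.2.1) * ((t • x) p.2.2.2)
            + ((t • x) p.1) * (pd a1 (fun y => N y p.2.1 p.2.2.1) (t • x)) * ((t • x) p.2.2.2)
            + ((t • x) p.1) * (N (t • x) p.2.1 p.2.2.1) * ((Pi.single a1 1 : V3) p.2.2.2))) := by
    funext b j
    simp only [colCurl]
    refine Finset.sum_congr rfl fun a1 _ => Finset.sum_congr rfl fun b1 _ => ?_
    rw [pdE N (t • x) hN b1 j a1]
  rw [hcurl]
  fin_cases i <;>
  · simp only [mulVec3, colCross, Fintype.sum_prod_type, Fin.sum_univ_three, Pi.smul_apply,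
      smul_eq_mul,
      lcv000, lcv001, lcv002, lcv010, lcv011, lcv012, lcv020, lcv021, lcv022, lcv100, lcv101,
      lcv102, lcv110, lcv111, lcv112, lcv120, lcv121, lcv122, lcv200, lcv201, lcv202, lcv210,
      lcv211, lcv212, lcv220, lcv221, lcv222,
      spv00, spv01, spv02, spv10, spv11, spv12, spv20, spv21, spv22,
      mul_zero, zero_mul, add_zero, zero_add, mul_one, one_mul, neg_mul, mul_neg, neg_neg]
    simp only [hs 1 0, hs 2 0, hs 2 1]
    ring

set_option maxHeartbeats 1000000 in
set_option synthInstance.maxHeartbeats 1000000 in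
lemma diffN (g : V3 → ℝ) (hg : ContDiff ℝ (⊤ : ℕ∞) g) (y₀ : V3) :
    DifferentiableAt ℝ (fun y : V3 => ∫ t in (0:ℝ)..1, t * (1 - t) * g (t • y)) y₀ := by
  obtain ⟨C, hC⟩ : ∃ C, ∀ z ∈ (fun p : ℝ × V3 => p.1 • p.2) ''
      (Set.Icc (0:ℝ) 1 ×ˢ Metric.closedBall y₀ 1), ‖fderiv ℝ g z‖ ≤ C := by
    have hK : IsCompact ((fun p : ℝ × V3 => p.1 • p.2) ''
        (Set.Icc (0:ℝ) 1 ×ˢ Metric.closedBall y₀ 1)) :=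
      (isCompact_Icc.prod (isCompact_closedBall _ _)).image (continuous_fst.smul continuous_snd)
    exact hK.exists_bound_of_continuousOn (hg.continuous_fderiv (by simp)).continuousOn
  have hdiff : ∀ (t : ℝ) (y : V3), HasFDerivAt (fun y' => t * (1 - t) * g (t • y'))
      ((t * (1 - t)) • ((fderiv ℝ g (t • y)).comp (t • ContinuousLinearMap.id ℝ V3))) y := by
    intro t y
    have h1 : HasFDerivAt (fun y' : V3 => t • y') (t • ContinuousLinearMap.id ℝ V3) y :=
      (t • ContinuousLinearMap.id ℝ V3).hasFDerivAt
    exact (((hg.differentiable (by simp) (t • y)).hasFDerivAt.comp y h1).const_mul _)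
  have hgc : Continuous g := hg.continuous
  refine (intervalIntegral.hasFDerivAt_integral_of_dominated_of_fderiv_le
    (F := fun y t => t * (1 - t) * g (t • y))
    (F' := fun y t => (t * (1 - t)) • ((fderiv ℝ g (t • y)).comp (t • ContinuousLinearMap.id ℝ V3)))
    (bound := fun _ => max C 0) (Metric.ball_mem_nhds y₀ one_pos) ?_ ?_ ?_ ?_ ?_ ?_).differentiableAt
  · filter_upwards with y
    exact ((continuous_id.mul (continuous_const.sub continuous_id)).mul
      (hgc.comp (continuous_id.smul continuous_const))).aestronglyMeasurable
  · exact ((continuous_id.mul (continuous_const.sub continuous_id)).mul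
      (hgc.comp (continuous_id.smul continuous_const))).intervalIntegrable 0 1
  · exact (((continuous_id.mul (continuous_const.sub continuous_id)).smul
      (Continuous.clm_comp ((hg.continuous_fderiv (by simp)).comp
        (continuous_id.smul continuous_const)) (continuous_id.smul continuous_const)))).aestronglyMeasurable
  · filter_upwards with s hs y hy
    rw [Set.uIoc_of_le (by norm_num : (0:ℝ) ≤ 1)] at hs
    have hs0 : 0 < s := hs.1
    have hs1 : s ≤ 1 := hs.2
    have hmem : s • y ∈ (fun p : ℝ × V3 => p.1 • p.2) ''
        (Set.Icc (0:ℝ) 1 ×ˢ Metric.closedBall y₀ 1) :=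
      ⟨(s, y), ⟨⟨le_of_lt hs0, hs1⟩, Metric.ball_subset_closedBall hy⟩, rfl⟩
    have hA : ‖fderiv ℝ g (s • y)‖ ≤ max C 0 := le_trans (hC _ hmem) (le_max_left _ _)
    have hB : ‖s • ContinuousLinearMap.id ℝ V3‖ ≤ 1 := by
      refine le_trans (ContinuousLinearMap.opNorm_smul_le _ _) ?_
      calc ‖s‖ * ‖ContinuousLinearMap.id ℝ V3‖ ≤ 1 * 1 := by
            apply mul_le_mul _ ContinuousLinearMap.norm_id_le (norm_nonneg _) zero_le_one
            rw [Real.norm_eq_abs, abs_le]; constructor <;> linarith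
        _ = 1 := one_mul 1
    have hcomp : ‖(fderiv ℝ g (s • y)).comp (s • ContinuousLinearMap.id ℝ V3)‖ ≤ max C 0 := by
      refine le_trans (ContinuousLinearMap.opNorm_comp_le _ _) ?_
      calc ‖fderiv ℝ g (s • y)‖ * ‖s • ContinuousLinearMap.id ℝ V3‖ ≤ max C 0 * 1 :=
            mul_le_mul hA hB (norm_nonneg _) (le_max_right _ _)
        _ = max C 0 := mul_one _
    refine le_trans (ContinuousLinearMap.opNorm_smul_le _ _) ?_
    calc ‖s * (1 - s)‖ * ‖(fderiv ℝ g (s • y)).comp (s • ContinuousLinearMap.id ℝ V3)‖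
        ≤ 1 * max C 0 := by
          apply mul_le_mul _ hcomp (norm_nonneg _) zero_le_one
          rw [Real.norm_eq_abs, abs_mul]
          have h1 : |s| ≤ 1 := by rw [abs_le]; constructor <;> linarith
          have h2 : |1 - s| ≤ 1 := by rw [abs_le]; constructor <;> linarith
          calc |s| * |1 - s| ≤ 1 * 1 := mul_le_mul h1 h2 (abs_nonneg _) zero_le_one
            _ = 1 := one_mul 1
      _ = max C 0 := one_mul _
  · exact intervalIntegrable_const
  · filter_upwards with s _ y _
    exact hdiff s y

end AuxStmt8

set_option maxHeartbeats 2000000 in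
set_option synthInstance.maxHeartbeats 1000000 in
theorem stmt8 (Vf : V3 → M33) (hV : SmoothM Vf) (hsym : SymM Vf) (x : V3) :
    P1 (P2 Vf) x = 0 := by
  have hNd : ∀ (y₀ : V3) (i j : Fin 3), DifferentiableAt ℝ
      (fun y => (fun y i j => ∫ t in (0:ℝ)..1, t * (1 - t) * Vf (t • y) i j) y i j) y₀ :=
    fun y₀ i j => diffN (fun p => Vf p i j) (hV i j) y₀
  have hNs : ∀ (y : V3) (i j : Fin 3),
      (fun y i j => ∫ t in (0:ℝ)..1, t * (1 - t) * Vf (t • y) i j) y i j =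
      (fun y i j => ∫ t in (0:ℝ)..1, t * (1 - t) * Vf (t • y) i j) y j i :=
    fun y i j => intervalIntegral.integral_congr (fun s _ => by rw [hsym])
  have hE2 : P2 Vf = fun y => colCross y
      (rowCross ((fun y i j => ∫ t in (0:ℝ)..1, t * (1 - t) * Vf (t • y) i j) y) y) := rfl
  funext i
  rw [hE2]
  simp only [P1, Pi.zero_apply]
  have h1 : ∀ t : ℝ, mulVec3 (colCross (t • x)
      (rowCross ((fun y i j => ∫ s in (0:ℝ)..1, s * (1 - s) * Vf (s • y) i j) (t • x)) (t • x))) x i = 0 :=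
    fun t => key1 (fun y i j => ∫ s in (0:ℝ)..1, s * (1 - s) * Vf (s • y) i j) x t i
  have h2 : ∀ t : ℝ, mulVec3 (colCross x (colCurl (fun y => colCross y
      (rowCross ((fun y i j => ∫ s in (0:ℝ)..1, s * (1 - s) * Vf (s • y) i j) y) y)) (t • x))) x i = 0 :=
    fun t => key2 (fun y i j => ∫ s in (0:ℝ)..1, s * (1 - s) * Vf (s • y) i j) x t (fun i j => hNd _ i j) (fun i j => hNs _ i j) i
  simp only [h1, h2, mul_zero, intervalIntegral.integral_zero, add_zero]
end
end

section
/- Homotopy identity for the auxiliary operators on W-valued forms: define A_k(ω,μ) = (dω − S_k μ, dμ) and B_k(ω,μ) = (𝔭ω − T_k μ, 𝔭μ), where S_k = d K_k − K_{k+1} d and T_k = 𝔭_k K_k − K_{k−1} 𝔭_k with K(ω) = x⊗ω − ω⊗x acting on coefficients and 𝔭 the standard Poincaré operators of the de Rham complex. Then A_{k−1} B_k + B_{k+1} A_k = id on Λᵏ(ℝ³; 𝕂 × 𝕍) (for 1 ≤ k ≤ 2; for k = 0 it holds up to constants). -/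
open MeasureTheory

noncomputable section

/-- A `E`-valued `k`-"form" on `ℝ³`, as a raw function of the base point and `k` vectors. -/
abbrev Form (k : ℕ) (E : Type) : Type := V3 → (Fin k → V3) → E

/-- A form is genuinely alternating: at each point it is given by an alternating
multilinear map. -/
def IsAlt {k : ℕ} {E : Type} [AddCommGroup E] [Module ℝ E] (ω : Form k E) : Prop :=
  ∀ x, ∃ A : AlternatingMap ℝ V3 E (Fin k), ω x = ⇑A

/-- Exterior derivative (formula for constant vector fields). -/
def extD {k : ℕ} {E : Type} [NormedAddCommGroup E] [NormedSpace ℝ E]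
    (ω : Form k E) : Form (k + 1) E :=
  fun x ξ => ∑ i : Fin (k + 1),
    (-1 : ℝ) ^ (i : ℕ) • fderiv ℝ (fun y => ω y fun j => ξ (i.succAbove j)) x (ξ i)

/-- The Poincaré operator `𝔭` along the path `t ↦ t x` (with base point `0`). -/
def poin {k : ℕ} {E : Type} [NormedAddCommGroup E] [NormedSpace ℝ E]
    (ω : Form (k + 1) E) : Form k E :=
  fun x ξ => ∫ t in (0:ℝ)..1, t ^ k • ω (t • x) (Fin.cons x ξ)

/-- The operator `K` acting on coefficients: `w ↦ x ⊗ w − w ⊗ x`. -/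
def Kop {k : ℕ} (ω : Form k V3) : Form k M33 :=
  fun x ξ => outer x (ω x ξ) - outer (ω x ξ) x

/-- `S = d K − K d`. -/
def Sop {k : ℕ} (μ : Form k V3) : Form (k + 1) M33 :=
  fun x ξ => extD (Kop μ) x ξ - Kop (extD μ) x ξ

/-- `T = 𝔭 K − K 𝔭`. -/
def Tkop {k : ℕ} (μ : Form (k + 1) V3) : Form k M33 :=
  fun x ξ => poin (Kop μ) x ξ - Kop (poin μ) x ξ

set_option maxHeartbeats 1600000
set_option synthInstance.maxHeartbeats 400000
section Aux
open MeasureTheory intervalIntegral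

variable {E : Type} [NormedAddCommGroup E] [NormedSpace ℝ E]

lemma cont_ray (g : V3 → E) (hg : Continuous g) (m : ℕ) (x : V3) :
    Continuous fun t : ℝ => t ^ m • g (t • x) :=
  (continuous_pow m).smul (hg.comp (continuous_id.smul continuous_const))

lemma cont_ray_fderiv (g : V3 → E) (hg : ContDiff ℝ (⊤ : ℕ∞) g) (m : ℕ) (x v : V3) :
    Continuous fun t : ℝ => t ^ m • (fderiv ℝ g (t • x)) v :=
  (continuous_pow m).smul
    (((hg.continuous_fderiv (by simp)).comp
      (continuous_id.smul continuous_const)).clm_apply continuous_const)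

lemma consExpand {k : ℕ} (A : AlternatingMap ℝ V3 E (Fin (k+1))) (y : V3) (η : Fin k → V3) :
    A (Fin.cons y η) = ∑ i : Fin 3, y i • A (Fin.cons (Pi.single i 1) η) := by
  have hy : y = ∑ i : Fin 3, y i • (Pi.single i (1:ℝ) : V3) := by
    ext j
    simp [Pi.single_apply, Finset.sum_apply]
  calc A (Fin.cons y η)
      = A (Function.update (Fin.cons (0:V3) η) 0 (∑ i : Fin 3, y i • (Pi.single i (1:ℝ) : V3))) := by
        rw [Fin.update_cons_zero, ← hy]
    _ = ∑ i : Fin 3, A (Function.update (Fin.cons (0:V3) η) 0 (y i • (Pi.single i (1:ℝ) : V3))) := by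
        exact A.toMultilinearMap.map_update_sum Finset.univ 0 _ _
    _ = ∑ i : Fin 3, y i • A (Fin.cons (Pi.single i 1) η) := by
        refine Finset.sum_congr rfl fun i _ => ?_
        rw [Fin.update_cons_zero]
        exact A.toMultilinearMap.cons_smul η (y i) (Pi.single i 1)

lemma consPerm {k : ℕ} (A : AlternatingMap ℝ V3 E (Fin (k+1))) (ξ : Fin (k+1) → V3) (a : Fin (k+1)) :
    A (Fin.cons (ξ a) (fun j => ξ (a.succAbove j))) = ((-1:ℝ)^(a:ℕ)) • A ξ := by
  have hfun : Fin.cons (ξ a) (fun j => ξ (a.succAbove j)) = ξ ∘ ⇑(Fin.cycleRange a).symm := by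
    funext i
    refine Fin.cases ?_ (fun j => ?_) i <;> simp
  rw [hfun, A.map_perm]
  have hsign : Equiv.Perm.sign (Fin.cycleRange a).symm = (-1 : ℤˣ)^(a:ℕ) := by
    rw [Equiv.Perm.sign_symm, Fin.sign_cycleRange]
  rw [hsign]
  rcases Int.even_or_odd (a:ℕ) with h | h
  · rw [(Even.neg_one_pow (by exact_mod_cast h) : ((-1:ℤˣ))^(a:ℕ) = 1),
      (Even.neg_one_pow (by exact_mod_cast h) : ((-1:ℝ))^(a:ℕ) = 1), one_smul, one_smul]
  · rw [(Odd.neg_one_pow (by exact_mod_cast h) : ((-1:ℤˣ))^(a:ℕ) = -1),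
      (Odd.neg_one_pow (by exact_mod_cast h) : ((-1:ℝ))^(a:ℕ) = -1), Units.neg_smul, one_smul,
      neg_one_smul]

variable [CompleteSpace E]

lemma hasFDerivAt_ray (g : V3 → E) (hg : ContDiff ℝ (⊤ : ℕ∞) g) (m : ℕ) (x₀ : V3) :
    HasFDerivAt (fun x : V3 => ∫ t in (0:ℝ)..1, t ^ m • g (t • x))
      (∫ t in (0:ℝ)..1, t ^ (m+1) • fderiv ℝ g (t • x₀)) x₀ := by
  obtain ⟨C, hC⟩ := (isCompact_closedBall (0:V3) (‖x₀‖ + 1)).exists_bound_of_continuousOn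
    ((hg.continuous_fderiv (by simp)).continuousOn)
  have hgc : Continuous g := hg.continuous
  have hfc : Continuous (fderiv ℝ g) := hg.continuous_fderiv (by simp)
  have hd : ∀ (t : ℝ) (x : V3), HasFDerivAt (fun x : V3 => t ^ m • g (t • x))
      (t ^ (m+1) • fderiv ℝ g (t • x)) x := by
    intro t x
    have h1 : HasFDerivAt g (fderiv ℝ g (t • x)) (t • x) :=
      (hg.differentiable (by simp) (t • x)).hasFDerivAt
    have h2 : HasFDerivAt (fun x : V3 => t • x) (t • ContinuousLinearMap.id ℝ V3) x :=
      (hasFDerivAt_id x).const_smul t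
    have h3 := (h1.comp x h2).const_smul (t ^ m)
    refine h3.congr_fderiv (Eq.symm ?_)
    ext v
    simp only [ContinuousLinearMap.smul_apply, ContinuousLinearMap.coe_comp',
      Function.comp_apply, ContinuousLinearMap.coe_id', id_eq, pow_succ]
    rw [(fderiv ℝ g (t • x)).map_smul, mul_smul, smul_comm]
  have key := intervalIntegral.hasFDerivAt_integral_of_dominated_of_fderiv_le
    (𝕜 := ℝ) (μ := volume) (a := (0:ℝ)) (b := 1)
    (F := fun x t => t ^ m • g (t • x))
    (F' := fun x t => t ^ (m+1) • fderiv ℝ g (t • x)) (x₀ := x₀)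
    (bound := fun _ => max C 0) (s := Metric.ball x₀ 1) (Metric.ball_mem_nhds x₀ one_pos)
    ?_ ?_ ?_ ?_ ?_ ?_
  · exact key
  · filter_upwards with x
    exact (cont_ray g hgc m x).aestronglyMeasurable
  · exact (cont_ray g hgc m x₀).intervalIntegrable _ _
  · exact ((continuous_pow (m+1)).smul
      (hfc.comp (continuous_id.smul continuous_const))).aestronglyMeasurable
  · filter_upwards with t ht x hx
    have ht' : t ∈ Set.Ioc (0:ℝ) 1 := by
      simpa [Set.uIoc_of_le (by norm_num : (0:ℝ) ≤ 1)] using ht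
    have hxball : ‖x‖ ≤ ‖x₀‖ + 1 := by
      have h := mem_ball_iff_norm.mp hx
      calc ‖x‖ = ‖x - x₀ + x₀‖ := by ring_nf
        _ ≤ ‖x - x₀‖ + ‖x₀‖ := norm_add_le _ _
        _ ≤ ‖x₀‖ + 1 := by linarith
    have htx : t • x ∈ Metric.closedBall (0:V3) (‖x₀‖ + 1) := by
      simp only [Metric.mem_closedBall, dist_zero_right, norm_smul, Real.norm_eq_abs]
      have : |t| ≤ 1 := by rw [abs_of_pos ht'.1]; exact ht'.2
      nlinarith [norm_nonneg x, abs_nonneg t]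
    calc ‖t ^ (m+1) • fderiv ℝ g (t • x)‖ ≤ ‖t ^ (m+1)‖ * ‖fderiv ℝ g (t • x)‖ :=
          ContinuousLinearMap.opNorm_smul_le _ _
      _ ≤ 1 * max C 0 := by
          apply mul_le_mul
          · rw [Real.norm_eq_abs, abs_pow]
            apply pow_le_one₀ (abs_nonneg t); rw [abs_of_pos ht'.1]; exact ht'.2
          · exact le_max_of_le_left (hC _ htx)
          · positivity
          · norm_num
      _ = max C 0 := one_mul _
  · exact intervalIntegrable_const
  · filter_upwards with t ht x hx using hd t x

end Aux
section Homotopy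
open MeasureTheory intervalIntegral

variable {E : Type} [NormedAddCommGroup E] [NormedSpace ℝ E] [CompleteSpace E]

lemma poin_sum_repr {k : ℕ} (ω : Form (k+1) E)
    (hs : ∀ ξ, ContDiff ℝ (⊤ : ℕ∞) fun x => ω x ξ) (ha : IsAlt ω)
    (y w : V3) (η : Fin k → V3) :
    (∫ t in (0:ℝ)..1, t^k • ω (t • y) (Fin.cons w η))
      = ∑ i : Fin 3, w i • ∫ t in (0:ℝ)..1,
          t^k • ω (t • y) (Fin.cons (Pi.single i 1) η) := by
  have hexp : ∀ z : V3, ω z (Fin.cons w η)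
      = ∑ i : Fin 3, w i • ω z (Fin.cons (Pi.single i 1) η) := by
    intro z
    obtain ⟨A, hA⟩ := ha z
    rw [hA]
    exact consExpand A w η
  rw [intervalIntegral.integral_congr
    (g := fun t => ∑ i : Fin 3, w i • (t^k • ω (t • y) (Fin.cons (Pi.single i 1) η)))
    (fun t _ => by rw [hexp, Finset.smul_sum]; exact Finset.sum_congr rfl fun i _ => smul_comm _ _ _)]
  rw [intervalIntegral.integral_finset_sum]
  · exact Finset.sum_congr rfl fun i _ => intervalIntegral.integral_smul _ _
  · intro i _
    exact ((cont_ray _ (hs _).continuous k y).const_smul (w i)).intervalIntegrable _ _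

lemma poin_hasFDerivAt {k : ℕ} (ω : Form (k+1) E)
    (hs : ∀ ξ, ContDiff ℝ (⊤ : ℕ∞) fun x => ω x ξ) (ha : IsAlt ω)
    (η : Fin k → V3) (x : V3) :
    HasFDerivAt (fun y => poin ω y η)
      (∑ i : Fin 3,
        (x i • (∫ t in (0:ℝ)..1,
            t^(k+1) • fderiv ℝ (fun z => ω z (Fin.cons (Pi.single i 1) η)) (t • x))
          + (ContinuousLinearMap.proj i).smulRight
              (∫ t in (0:ℝ)..1, t^k • ω (t • x) (Fin.cons (Pi.single i 1) η)))) x := by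
  have hPoinEq : (fun y => poin ω y η)
      = fun y => ∑ i : Fin 3, y i • ∫ t in (0:ℝ)..1,
          t^k • ω (t • y) (Fin.cons (Pi.single i 1) η) := by
    funext y
    exact poin_sum_repr ω hs ha y y η
  rw [hPoinEq]
  refine HasFDerivAt.fun_sum fun i _ => ?_
  exact ((ContinuousLinearMap.proj i : V3 →L[ℝ] ℝ).hasFDerivAt).smul
    (hasFDerivAt_ray _ (hs _) k x)

lemma homotopy {k : ℕ} (ω : Form (k+1) E)
    (hs : ∀ ξ, ContDiff ℝ (⊤ : ℕ∞) fun x => ω x ξ) (ha : IsAlt ω) (x : V3) (ξ : Fin (k+1) → V3) :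
    extD (poin ω) x ξ + poin (extD ω) x ξ = ω x ξ := by
  -- notation
  obtain ⟨I₀, hI₀⟩ : ∃ v : E, v = ∫ t in (0:ℝ)..1, t^k • ω (t • x) ξ := ⟨_, rfl⟩
  obtain ⟨J, hJ⟩ : ∃ f : Fin (k+1) → E, f = fun a => ∫ t in (0:ℝ)..1,
      t^(k+1) • (fderiv ℝ (fun z => ω z (Fin.cons x (fun j => ξ (a.succAbove j)))) (t • x)) (ξ a) :=
    ⟨_, rfl⟩
  have hperm : ∀ (z : V3) (a : Fin (k+1)),
      ω z (Fin.cons (ξ a) (fun j => ξ (a.succAbove j))) = ((-1:ℝ)^(a:ℕ)) • ω z ξ := by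
    intro z a
    obtain ⟨A, hA⟩ := ha z
    rw [hA]
    exact consPerm A ξ a
  have hDsum : ∀ (η : Fin k → V3) (w z : V3),
      fderiv ℝ (fun z' => ω z' (Fin.cons w η)) z
        = ∑ i : Fin 3, w i • fderiv ℝ (fun z' => ω z' (Fin.cons (Pi.single i 1) η)) z := by
    intro η w z
    have heq : (fun z' => ω z' (Fin.cons w η))
        = fun z' => ∑ i : Fin 3, w i • ω z' (Fin.cons (Pi.single i 1) η) := by
      funext z'
      obtain ⟨A, hA⟩ := ha z'
      rw [hA]
      exact consExpand A w η
    rw [heq]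
    exact (HasFDerivAt.fun_sum fun i _ =>
      (((hs _).differentiable (by simp) z).hasFDerivAt).const_smul (w i)).fderiv
  -- Part 1 : extD (poin ω)
  have hext : extD (poin ω) x ξ = ∑ a : Fin (k+1), ((-1:ℝ)^(a:ℕ)) • (J a + ((-1:ℝ)^(a:ℕ)) • I₀) := by
    simp only [extD]
    refine Finset.sum_congr rfl fun a _ => ?_
    congr 1
    rw [(poin_hasFDerivAt ω hs ha (fun j => ξ (a.succAbove j)) x).fderiv]
    simp only [ContinuousLinearMap.sum_apply, ContinuousLinearMap.add_apply,
      ContinuousLinearMap.smul_apply, ContinuousLinearMap.smulRight_apply,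
      ContinuousLinearMap.proj_apply]
    rw [Finset.sum_add_distrib]
    congr 1
    · -- derivative part equals J a
      have happly : ∀ i : Fin 3,
          (∫ t in (0:ℝ)..1, t^(k+1) • fderiv ℝ
              (fun z => ω z (Fin.cons (Pi.single i 1) (fun j => ξ (a.succAbove j)))) (t • x)) (ξ a)
            = ∫ t in (0:ℝ)..1, t^(k+1) • (fderiv ℝ
              (fun z => ω z (Fin.cons (Pi.single i 1) (fun j => ξ (a.succAbove j)))) (t • x)) (ξ a) := by
        intro i
        rw [ContinuousLinearMap.intervalIntegral_apply]
        · exact intervalIntegral.integral_congr fun t _ => by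
            simp [ContinuousLinearMap.smul_apply]
        · exact ((continuous_pow (k+1)).smul
            (((hs _).continuous_fderiv (by simp)).comp
              (continuous_id.smul continuous_const))).intervalIntegrable _ _
      calc (∑ i : Fin 3, x i • (∫ t in (0:ℝ)..1, t^(k+1) • fderiv ℝ
              (fun z => ω z (Fin.cons (Pi.single i 1) (fun j => ξ (a.succAbove j)))) (t • x)) (ξ a))
          = ∑ i : Fin 3, ∫ t in (0:ℝ)..1, x i • (t^(k+1) • (fderiv ℝ
              (fun z => ω z (Fin.cons (Pi.single i 1) (fun j => ξ (a.succAbove j)))) (t • x)) (ξ a)) := by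
            refine Finset.sum_congr rfl fun i _ => ?_
            rw [happly i, intervalIntegral.integral_smul]
        _ = ∫ t in (0:ℝ)..1, ∑ i : Fin 3, x i • (t^(k+1) • (fderiv ℝ
              (fun z => ω z (Fin.cons (Pi.single i 1) (fun j => ξ (a.succAbove j)))) (t • x)) (ξ a)) := by
            rw [intervalIntegral.integral_finset_sum]
            intro i _
            exact ((cont_ray_fderiv _ (hs _) (k+1) x (ξ a)).const_smul (x i)).intervalIntegrable _ _
        _ = J a := by
            simp only [hJ]
            refine intervalIntegral.integral_congr fun t _ => ?_
            rw [hDsum (fun j => ξ (a.succAbove j)) x (t • x)]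
            simp only [ContinuousLinearMap.sum_apply, ContinuousLinearMap.smul_apply]
            rw [Finset.smul_sum]
            exact Finset.sum_congr rfl fun i _ => (smul_comm _ _ _)
    · -- value part equals (-1)^a • I₀
      calc (∑ i : Fin 3, (ξ a) i • ∫ t in (0:ℝ)..1,
              t^k • ω (t • x) (Fin.cons (Pi.single i 1) (fun j => ξ (a.succAbove j))))
          = ∫ t in (0:ℝ)..1, t^k • ω (t • x) (Fin.cons (ξ a) (fun j => ξ (a.succAbove j))) :=
            (poin_sum_repr ω hs ha x (ξ a) _).symm
        _ = ((-1:ℝ)^(a:ℕ)) • I₀ := by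
            rw [hI₀, ← intervalIntegral.integral_smul]
            refine intervalIntegral.integral_congr fun t _ => ?_
            rw [hperm, smul_comm]
  -- Part 2 : poin (extD ω)
  have htup : ∀ (b : Fin (k+1)),
      (fun j => (Fin.cons x ξ : Fin (k+2) → V3) ((b.succ).succAbove j))
        = (Fin.cons x (fun j => ξ (b.succAbove j)) : Fin (k+1) → V3) := by
    intro b
    funext j
    induction j using Fin.cases with
    | zero => simp
    | succ j' => simp [Fin.succ_succAbove_succ]
  have hconsξ : ∀ z : V3, extD ω z (Fin.cons x ξ)
      = (fderiv ℝ (fun y => ω y ξ) z) x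
        - ∑ a : Fin (k+1), ((-1:ℝ)^(a:ℕ)) •
            (fderiv ℝ (fun y => ω y (Fin.cons x (fun j => ξ (a.succAbove j)))) z) (ξ a) := by
    intro z
    simp only [extD]
    rw [Fin.sum_univ_succ, sub_eq_add_neg]
    congr 1
    · have h0 : (fun j => (Fin.cons x ξ : Fin (k+2) → V3) ((0 : Fin (k+2)).succAbove j)) = ξ := by
        funext j
        simp [Fin.succAbove_zero]
      rw [h0]
      simp
    · rw [← Finset.sum_neg_distrib]
      refine Finset.sum_congr rfl fun b _ => ?_
      rw [htup b]
      have hsign : ((-1:ℝ))^((b.succ : Fin (k+2)) : ℕ) = -((-1:ℝ)^(b:ℕ)) := by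
        rw [Fin.val_succ, pow_succ]
        ring
      rw [hsign, Fin.cons_succ]
      rw [neg_smul]
  have hpoin2 : poin (extD ω) x ξ
      = (∫ t in (0:ℝ)..1, t^(k+1) • (fderiv ℝ (fun y => ω y ξ) (t • x)) x)
        - ∑ a : Fin (k+1), ((-1:ℝ)^(a:ℕ)) • J a := by
    have h1 : poin (extD ω) x ξ = ∫ t in (0:ℝ)..1,
        (t^(k+1) • (fderiv ℝ (fun y => ω y ξ) (t • x)) x
          - t^(k+1) • ∑ a : Fin (k+1), ((-1:ℝ)^(a:ℕ)) •
              (fderiv ℝ (fun y => ω y (Fin.cons x (fun j => ξ (a.succAbove j)))) (t • x)) (ξ a)) := by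
      refine intervalIntegral.integral_congr fun t _ => ?_
      show t^(k+1) • extD ω (t • x) (Fin.cons x ξ) = _
      rw [hconsξ (t • x), smul_sub]
    rw [h1, intervalIntegral.integral_sub]
    · congr 1
      calc (∫ t in (0:ℝ)..1, t^(k+1) • ∑ a : Fin (k+1), ((-1:ℝ)^(a:ℕ)) •
              (fderiv ℝ (fun y => ω y (Fin.cons x (fun j => ξ (a.succAbove j)))) (t • x)) (ξ a))
          = ∫ t in (0:ℝ)..1, ∑ a : Fin (k+1), ((-1:ℝ)^(a:ℕ)) • (t^(k+1) •
              (fderiv ℝ (fun y => ω y (Fin.cons x (fun j => ξ (a.succAbove j)))) (t • x)) (ξ a)) := by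
            refine intervalIntegral.integral_congr fun t _ => ?_
            rw [Finset.smul_sum]
            exact Finset.sum_congr rfl fun a _ => smul_comm _ _ _
        _ = ∑ a : Fin (k+1), ((-1:ℝ)^(a:ℕ)) • J a := by
            rw [intervalIntegral.integral_finset_sum]
            · refine Finset.sum_congr rfl fun a _ => ?_
              simp only [hJ]
              exact intervalIntegral.integral_smul _ _
            · intro a _
              exact ((cont_ray_fderiv _ (hs _) (k+1) x (ξ a)).const_smul _).intervalIntegrable _ _
    · exact (cont_ray_fderiv _ (hs _) (k+1) x x).intervalIntegrable _ _
    · apply Continuous.intervalIntegrable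
      apply (continuous_pow (k+1)).smul
      exact continuous_finset_sum _ fun a _ =>
        ((((hs _).continuous_fderiv (by simp)).comp
          (continuous_id.smul continuous_const)).clm_apply continuous_const).const_smul _
  -- Part 3 : FTC
  have hFTC : ∀ t ∈ Set.uIcc (0:ℝ) 1,
      HasDerivAt (fun s : ℝ => s^(k+1) • ω (s • x) ξ)
        (t^(k+1) • (fderiv ℝ (fun y => ω y ξ) (t • x)) x
          + (((k+1 : ℕ) : ℝ) * t^k) • ω (t • x) ξ) t := by
    intro t _
    have hc : HasDerivAt (fun s : ℝ => s^(k+1)) (((k+1 : ℕ) : ℝ) * t^k) t := by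
      simpa using hasDerivAt_pow (k+1) t
    have hf : HasDerivAt (fun s : ℝ => ω (s • x) ξ) ((fderiv ℝ (fun y => ω y ξ) (t • x)) x) t := by
      have h1 : HasFDerivAt (fun y => ω y ξ) (fderiv ℝ (fun y => ω y ξ) (t • x)) (t • x) :=
        ((hs ξ).differentiable (by simp) (t • x)).hasFDerivAt
      have h2 : HasDerivAt (fun s : ℝ => s • x) x t := by
        simpa using (hasDerivAt_id t).smul_const x
      exact h1.comp_hasDerivAt t h2
    simpa using hc.fun_smul hf
  have hintA : IntervalIntegrable
      (fun t : ℝ => t^(k+1) • (fderiv ℝ (fun y => ω y ξ) (t • x)) x) volume 0 1 :=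
    (cont_ray_fderiv _ (hs ξ) (k+1) x x).intervalIntegrable _ _
  have hintB : IntervalIntegrable
      (fun t : ℝ => (((k+1 : ℕ) : ℝ) * t^k) • ω (t • x) ξ) volume 0 1 := by
    apply Continuous.intervalIntegrable
    exact ((continuous_const.mul (continuous_pow k)).smul
      ((hs ξ).continuous.comp (continuous_id.smul continuous_const)))
  have hFTCint : (∫ t in (0:ℝ)..1,
        (t^(k+1) • (fderiv ℝ (fun y => ω y ξ) (t • x)) x
          + (((k+1 : ℕ) : ℝ) * t^k) • ω (t • x) ξ))
      = (fun s : ℝ => s^(k+1) • ω (s • x) ξ) 1 - (fun s : ℝ => s^(k+1) • ω (s • x) ξ) 0 :=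
    intervalIntegral.integral_eq_sub_of_hasDerivAt hFTC (hintA.add hintB)
  have hsplit : (∫ t in (0:ℝ)..1,
        (t^(k+1) • (fderiv ℝ (fun y => ω y ξ) (t • x)) x
          + (((k+1 : ℕ) : ℝ) * t^k) • ω (t • x) ξ))
      = (∫ t in (0:ℝ)..1, t^(k+1) • (fderiv ℝ (fun y => ω y ξ) (t • x)) x)
        + ((k+1 : ℕ) : ℝ) • I₀ := by
    rw [intervalIntegral.integral_add]
    · congr 1
      rw [hI₀, ← intervalIntegral.integral_smul]
      exact intervalIntegral.integral_congr fun t _ => (mul_smul _ _ _)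
    · exact hintA
    · exact hintB
  have hval : (∫ t in (0:ℝ)..1, t^(k+1) • (fderiv ℝ (fun y => ω y ξ) (t • x)) x)
      + ((k+1 : ℕ) : ℝ) • I₀ = ω x ξ := by
    rw [← hsplit, hFTCint]
    norm_num
  -- combine
  rw [hext, hpoin2]
  have hsq : ∀ a : Fin (k+1), ((-1:ℝ)^(a:ℕ)) • (((-1:ℝ)^(a:ℕ)) • I₀) = I₀ := by
    intro a
    rw [smul_smul, ← pow_add, Even.neg_one_pow ⟨(a:ℕ), by ring⟩, one_smul]
  calc (∑ a : Fin (k+1), ((-1:ℝ)^(a:ℕ)) • (J a + ((-1:ℝ)^(a:ℕ)) • I₀))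
        + ((∫ t in (0:ℝ)..1, t^(k+1) • (fderiv ℝ (fun y => ω y ξ) (t • x)) x)
            - ∑ a : Fin (k+1), ((-1:ℝ)^(a:ℕ)) • J a)
      = (∑ a : Fin (k+1), (((-1:ℝ)^(a:ℕ)) • J a + I₀))
        + ((∫ t in (0:ℝ)..1, t^(k+1) • (fderiv ℝ (fun y => ω y ξ) (t • x)) x)
            - ∑ a : Fin (k+1), ((-1:ℝ)^(a:ℕ)) • J a) := by
        congr 1
        refine Finset.sum_congr rfl fun a _ => ?_
        rw [smul_add, hsq a]
    _ = ((k+1 : ℕ) : ℝ) • I₀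
        + (∫ t in (0:ℝ)..1, t^(k+1) • (fderiv ℝ (fun y => ω y ξ) (t • x)) x) := by
        rw [Finset.sum_add_distrib, Finset.sum_const]
        simp only [Finset.card_univ, Fintype.card_fin]
        rw [Nat.cast_smul_eq_nsmul]
        abel
    _ = ω x ξ := by rw [add_comm]; exact hval

end Homotopy
section Wrapper
open MeasureTheory intervalIntegral

variable {E : Type} [NormedAddCommGroup E] [NormedSpace ℝ E]

omit [NormedSpace ℝ E] in
lemma cont_extD' {k : ℕ} (ν : Form k E) [NormedSpace ℝ E]
    (hν : ∀ ξ, ContDiff ℝ (⊤ : ℕ∞) fun z => ν z ξ) (η : Fin (k+1) → V3) :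
    Continuous fun z => extD ν z η := by
  apply continuous_finset_sum
  intro i _
  exact (((hν _).continuous_fderiv (by simp)).clm_apply continuous_const).const_smul _

lemma contDiff_Kop {k : ℕ} (ν : Form k V3) (hν : ∀ ξ, ContDiff ℝ (⊤ : ℕ∞) fun z => ν z ξ) :
    ∀ ξ, ContDiff ℝ (⊤ : ℕ∞) fun z => Kop ν z ξ := by
  intro ξ
  apply contDiff_pi.2; intro i; apply contDiff_pi.2; intro j
  have hproj : ∀ (m : Fin 3), ContDiff ℝ (⊤ : ℕ∞) fun z : V3 => z m :=
    fun m => (ContinuousLinearMap.proj (R := ℝ) (φ := fun _ : Fin 3 => ℝ) m).contDiff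
  have hcomp : ∀ (m : Fin 3), ContDiff ℝ (⊤ : ℕ∞) fun z => ν z ξ m := fun m => contDiff_pi.1 (hν ξ) m
  simp only [Kop, outer, Pi.sub_apply]
  exact ((hproj i).mul (hcomp j)).sub ((hcomp i).mul (hproj j))

def KLin (x : V3) : V3 →ₗ[ℝ] M33 where
  toFun v := outer x v - outer v x
  map_add' u v := by funext i j; simp [outer]; ring
  map_smul' c v := by funext i j; simp [outer]; ring

lemma isAlt_Kop {k : ℕ} (ν : Form k V3) (hν : IsAlt ν) : IsAlt (Kop ν) := by
  intro x
  obtain ⟨A, hA⟩ := hν x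
  refine ⟨(KLin x).compAlternatingMap A, ?_⟩
  funext ξ
  simp only [Kop, hA, LinearMap.compAlternatingMap_apply, KLin, LinearMap.coe_mk,
    AddHom.coe_mk]

lemma diffAt_Kop {k : ℕ} (ν : Form k V3) {η : Fin k → V3} {x : V3}
    (hd : DifferentiableAt ℝ (fun y => ν y η) x) :
    DifferentiableAt ℝ (fun y => Kop ν y η) x := by
  have hc : ∀ j : Fin 3, DifferentiableAt ℝ (fun y => ν y η j) x :=
    fun j => (differentiableAt_pi.1 hd) j
  have hp : ∀ m : Fin 3, DifferentiableAt ℝ (fun y : V3 => y m) x :=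
    fun m => (ContinuousLinearMap.proj (R := ℝ) (φ := fun _ : Fin 3 => ℝ) m).differentiableAt
  apply differentiableAt_pi.2; intro i; apply differentiableAt_pi.2; intro j
  simp only [Kop, outer, Pi.sub_apply]
  exact ((hp i).mul (hc j)).sub ((hc i).mul (hp j))

lemma cont_Kop {k : ℕ} (ν : Form k V3) {η : Fin k → V3}
    (hc : Continuous fun z => ν z η) :
    Continuous fun z => Kop ν z η := by
  apply continuous_pi; intro i; apply continuous_pi; intro j
  simp only [Kop, outer, Pi.sub_apply]
  exact ((continuous_apply i).mul ((continuous_apply j).comp hc)).sub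
    (((continuous_apply i).comp hc).mul (continuous_apply j))

end Wrapper

theorem stmt16 (k : ℕ) (hk : k + 1 ≤ 2)
    (ω : Form (k + 1) M33) (μ : Form (k + 1) V3)
    (hω : ∀ ξ i j, ContDiff ℝ (⊤ : ℕ∞) fun x => ω x ξ i j)
    (hμ : ∀ ξ i, ContDiff ℝ (⊤ : ℕ∞) fun x => μ x ξ i)
    (haω : IsAlt ω) (haμ : IsAlt μ) :
    (∀ x ξ,
      extD (fun y η => poin ω y η - Tkop μ y η) x ξ - Sop (poin μ) x ξ
        + (poin (fun y η => extD ω y η - Sop μ y η) x ξ - Tkop (extD μ) x ξ)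
      = ω x ξ)
    ∧ (∀ x ξ, extD (poin μ) x ξ + poin (extD μ) x ξ = μ x ξ) := by
  have hsω : ∀ ξ, ContDiff ℝ (⊤ : ℕ∞) fun x => ω x ξ :=
    fun ξ => contDiff_pi.2 fun i => contDiff_pi.2 fun j => hω ξ i j
  have hsμ : ∀ ξ, ContDiff ℝ (⊤ : ℕ∞) fun x => μ x ξ := fun ξ => contDiff_pi.2 (hμ ξ)
  have hsKμ := contDiff_Kop μ hsμ
  have haKμ := isAlt_Kop μ haμ
  have Hμ : ∀ x ξ, extD (poin μ) x ξ + poin (extD μ) x ξ = μ x ξ :=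
    fun x ξ => homotopy μ hsμ haμ x ξ
  refine ⟨?_, Hμ⟩
  intro x ξ
  have hdPω : ∀ (η : Fin k → V3), DifferentiableAt ℝ (fun y => poin ω y η) x :=
    fun η => (poin_hasFDerivAt ω hsω haω η x).differentiableAt
  have hdPKμ : ∀ (η : Fin k → V3), DifferentiableAt ℝ (fun y => poin (Kop μ) y η) x :=
    fun η => (poin_hasFDerivAt (Kop μ) hsKμ haKμ η x).differentiableAt
  have hdPμ : ∀ (η : Fin k → V3), DifferentiableAt ℝ (fun y => poin μ y η) x :=
    fun η => (poin_hasFDerivAt μ hsμ haμ η x).differentiableAt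
  have hdKPμ : ∀ (η : Fin k → V3), DifferentiableAt ℝ (fun y => Kop (poin μ) y η) x :=
    fun η => diffAt_Kop (poin μ) (hdPμ η)
  have e1 : extD (fun y η => poin ω y η - Tkop μ y η) x ξ
      = extD (poin ω) x ξ - extD (poin (Kop μ)) x ξ + extD (Kop (poin μ)) x ξ := by
    simp only [extD, Tkop]
    rw [← Finset.sum_sub_distrib, ← Finset.sum_add_distrib]
    refine Finset.sum_congr rfl fun a _ => ?_
    rw [← smul_sub, ← smul_add]
    congr 1
    rw [fderiv_fun_sub (hdPω _) (show DifferentiableAt ℝ (fun y => poin (Kop μ) y (fun j => ξ (a.succAbove j))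
      - Kop (poin μ) y (fun j => ξ (a.succAbove j))) x from (hdPKμ _).sub (hdKPμ _)), fderiv_fun_sub (hdPKμ _) (hdKPμ _)]
    simp only [ContinuousLinearMap.sub_apply]
    abel
  have e2 : Sop (poin μ) x ξ = extD (Kop (poin μ)) x ξ - Kop (extD (poin μ)) x ξ := rfl
  have e3 : Tkop (extD μ) x ξ = poin (Kop (extD μ)) x ξ - Kop (poin (extD μ)) x ξ := rfl
  have hcEω : Continuous fun z => extD ω z (Fin.cons x ξ) := cont_extD' ω hsω _
  have hcEKμ : Continuous fun z => extD (Kop μ) z (Fin.cons x ξ) := cont_extD' (Kop μ) hsKμ _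
  have hcKEμ : Continuous fun z => Kop (extD μ) z (Fin.cons x ξ) :=
    cont_Kop (extD μ) (cont_extD' μ hsμ _)
  have e4 : poin (fun y η => extD ω y η - Sop μ y η) x ξ
      = poin (extD ω) x ξ - poin (extD (Kop μ)) x ξ + poin (Kop (extD μ)) x ξ := by
    show (∫ t in (0:ℝ)..1, t^(k+1) •
        (extD ω (t • x) (Fin.cons x ξ)
          - (extD (Kop μ) (t • x) (Fin.cons x ξ) - Kop (extD μ) (t • x) (Fin.cons x ξ)))) = _
    rw [intervalIntegral.integral_congr
      (g := fun t => (t^(k+1) • extD ω (t • x) (Fin.cons x ξ)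
        - (t^(k+1) • extD (Kop μ) (t • x) (Fin.cons x ξ)
            - t^(k+1) • Kop (extD μ) (t • x) (Fin.cons x ξ))))
      (fun t _ => by rw [smul_sub, smul_sub])]
    rw [intervalIntegral.integral_sub ((cont_ray _ hcEω (k+1) x).intervalIntegrable _ _)
      (((cont_ray _ hcEKμ (k+1) x).intervalIntegrable _ _).sub
        ((cont_ray _ hcKEμ (k+1) x).intervalIntegrable _ _)),
      intervalIntegral.integral_sub ((cont_ray _ hcEKμ (k+1) x).intervalIntegrable _ _)
        ((cont_ray _ hcKEμ (k+1) x).intervalIntegrable _ _)]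
    show _ = (∫ t in (0:ℝ)..1, t^(k+1) • extD ω (t • x) (Fin.cons x ξ))
      - (∫ t in (0:ℝ)..1, t^(k+1) • extD (Kop μ) (t • x) (Fin.cons x ξ))
      + (∫ t in (0:ℝ)..1, t^(k+1) • Kop (extD μ) (t • x) (Fin.cons x ξ))
    abel
  have e5 : Kop (extD (poin μ)) x ξ + Kop (poin (extD μ)) x ξ = Kop μ x ξ := by
    have hv := Hμ x ξ
    funext i j
    have hvi := congrFun hv i
    have hvj := congrFun hv j
    simp only [Pi.add_apply] at hvi hvj
    simp only [Kop, outer, Pi.add_apply, Pi.sub_apply]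
    linear_combination x i * hvj - x j * hvi
  have e6 : extD (poin (Kop μ)) x ξ + poin (extD (Kop μ)) x ξ = Kop μ x ξ :=
    homotopy (Kop μ) hsKμ haKμ x ξ
  have e7 : extD (poin ω) x ξ + poin (extD ω) x ξ = ω x ξ :=
    homotopy ω hsω haω x ξ
  rw [e1, e2, e3, e4]
  linear_combination e7 - e6 + e5
end
end

section
/- Anticommutation identity dS + Sd = 0: with K(ω) = x⊗ω − ω⊗x acting on coefficients of vector-valued k-forms on ℝ³ and S_k := d K_k − K_{k+1} d, one has d_{k+1} S_k + S_{k+1} d_k = 0 for all k; consequently the operator A_k(ω,μ) := (d_k ω − S_k μ, d_k μ) on (𝕂 × 𝕍)-valued forms satisfies A_{k+1} A_k = 0. -/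
open MeasureTheory

noncomputable section

lemma succAbove_val {n : ℕ} (i : Fin (n+1)) (j : Fin n) :
    ((i.succAbove j : Fin (n+1)) : ℕ) = if (j:ℕ) < (i:ℕ) then (j:ℕ) else (j:ℕ)+1 := by
  rcases lt_or_ge ((j:ℕ)) ((i:ℕ)) with h | h
  · rw [Fin.succAbove_of_castSucc_lt _ _ (by simpa [Fin.lt_def] using h), if_pos h]; rfl
  · rw [Fin.succAbove_of_le_castSucc _ _ (by simpa [Fin.le_def] using h), if_neg (by omega)]; rfl

/-- The swap involution on index pairs. -/
def swp {n : ℕ} (p : Fin (n+2) × Fin (n+1)) : Fin (n+2) × Fin (n+1) :=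
  if h : (p.2:ℕ) < (p.1:ℕ) then
    (⟨(p.2:ℕ), by omega⟩, ⟨(p.1:ℕ)-1, by have := p.1.isLt; omega⟩)
  else
    (⟨(p.2:ℕ)+1, by have := p.2.isLt; omega⟩, ⟨(p.1:ℕ), by have := p.2.isLt; omega⟩)

lemma swp_pos {n : ℕ} (i : Fin (n+2)) (j : Fin (n+1)) (h : (j:ℕ) < (i:ℕ)) :
    swp (i, j) = (⟨(j:ℕ), by omega⟩, ⟨(i:ℕ)-1, by have := i.isLt; omega⟩) := by
  simp only [swp]; rw [dif_pos h]

lemma swp_neg {n : ℕ} (i : Fin (n+2)) (j : Fin (n+1)) (h : ¬ (j:ℕ) < (i:ℕ)) :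
    swp (i, j) = (⟨(j:ℕ)+1, by have := j.isLt; omega⟩, ⟨(i:ℕ), by have := j.isLt; omega⟩) := by
  simp only [swp]; rw [dif_neg h]

lemma swp_swp {n : ℕ} (p : Fin (n+2) × Fin (n+1)) : swp (swp p) = p := by
  obtain ⟨i, j⟩ := p
  by_cases h : (j:ℕ) < (i:ℕ)
  · rw [swp_pos i j h, swp_neg _ _ (by simp only [Fin.val_mk]; try omega)]
    refine Prod.ext ?_ ?_ <;> (apply Fin.ext; simp only [Fin.val_mk]; try omega)
  · rw [swp_neg i j h, swp_pos _ _ (by simp only [Fin.val_mk]; try omega)]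
    refine Prod.ext ?_ ?_ <;> (apply Fin.ext; simp only [Fin.val_mk]; try omega)

lemma swp_ne {n : ℕ} (p : Fin (n+2) × Fin (n+1)) : swp p ≠ p := by
  obtain ⟨i, j⟩ := p
  by_cases h : (j:ℕ) < (i:ℕ) <;>
    [rw [swp_pos i j h]; rw [swp_neg i j h]] <;>
    intro hq <;> have := congrArg (fun q => ((q.1 : Fin (n+2)) : ℕ)) hq <;>
    simp at this <;> omega

lemma pairTerm_cancel {E : Type} [AddCommGroup E] [Module ℝ E] {n : ℕ}
    (G : (Fin n → Fin (n+2)) → Fin (n+2) → Fin (n+2) → E)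
    (hG : ∀ r u v, G r u v = G r v u)
    (F : Fin (n+2) × Fin (n+1) → E)
    (hF : ∀ p, F p = ((-1:ℝ)^((p.1:ℕ)+(p.2:ℕ))) •
      G (fun m => p.1.succAbove (p.2.succAbove m)) p.1 (p.1.succAbove p.2))
    (i : Fin (n+2)) (j : Fin (n+1)) (h : (j:ℕ) < (i:ℕ)) :
    F (i, j) + F (swp (i, j)) = 0 := by
  rw [swp_pos i j h, hF, hF]
  set i' : Fin (n+2) := ⟨(j:ℕ), by omega⟩ with hi'
  set j' : Fin (n+1) := ⟨(i:ℕ)-1, by have := i.isLt; omega⟩ with hj'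
  have hr : (fun m => i.succAbove (j.succAbove m)) = fun m => i'.succAbove (j'.succAbove m) := by
    funext m
    apply Fin.ext
    rw [succAbove_val, succAbove_val, succAbove_val, succAbove_val]
    have hm := m.isLt
    simp only [hi', hj']
    split_ifs <;> omega
  have hv1 : i.succAbove j = i' := by
    apply Fin.ext; rw [succAbove_val, if_pos h]
  have hv2 : i'.succAbove j' = i := by
    apply Fin.ext; rw [succAbove_val]
    simp only [hi', hj']
    rw [if_neg (by omega)]
    omega
  rw [hr, hv1, hv2, hG _ i' i]
  rw [← add_smul]
  convert zero_smul ℝ _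
  have hi1 : 1 ≤ (i:ℕ) := by omega
  have : (i:ℕ) + (j:ℕ) = ((i':ℕ) + (j':ℕ)) + 1 := by simp [hi', hj']; omega
  rw [this, pow_succ]
  ring

lemma double_sum_zero {E : Type} [AddCommGroup E] [Module ℝ E] {n : ℕ}
    (G : (Fin n → Fin (n+2)) → Fin (n+2) → Fin (n+2) → E)
    (hG : ∀ r u v, G r u v = G r v u) :
    ∑ i : Fin (n+2), ∑ j : Fin (n+1),
      ((-1:ℝ)^((i:ℕ)+(j:ℕ))) • G (fun m => i.succAbove (j.succAbove m)) i (i.succAbove j)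
      = 0 := by
  classical
  set F : Fin (n+2) × Fin (n+1) → E := fun p =>
    ((-1:ℝ)^((p.1:ℕ)+(p.2:ℕ))) •
      G (fun m => p.1.succAbove (p.2.succAbove m)) p.1 (p.1.succAbove p.2) with hFdef
  have hF : ∀ p, F p = ((-1:ℝ)^((p.1:ℕ)+(p.2:ℕ))) •
      G (fun m => p.1.succAbove (p.2.succAbove m)) p.1 (p.1.succAbove p.2) := fun _ => rfl
  have key : ∀ p : Fin (n+2) × Fin (n+1), F p + F (swp p) = 0 := by
    intro ⟨i, j⟩
    by_cases h : (j:ℕ) < (i:ℕ)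
    · exact pairTerm_cancel G hG F hF i j h
    · have hb1 : (j:ℕ)+1 < n+2 := by have := j.isLt; omega
      have hb2 : (i:ℕ) < n+1 := by have := j.isLt; omega
      have hc : ((⟨(i:ℕ), hb2⟩ : Fin (n+1)) : ℕ) < ((⟨(j:ℕ)+1, hb1⟩ : Fin (n+2)) : ℕ) := by
        simp only [Fin.val_mk]; omega
      have h2 := pairTerm_cancel G hG F hF ⟨(j:ℕ)+1, hb1⟩ ⟨(i:ℕ), hb2⟩ hc
      have e2 : swp ((⟨(j:ℕ)+1, hb1⟩ : Fin (n+2)), (⟨(i:ℕ), hb2⟩ : Fin (n+1))) = (i, j) := by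
        rw [swp_pos _ _ hc]
        refine Prod.ext ?_ ?_ <;> (apply Fin.ext; simp only [Fin.val_mk]; try omega)
      have e : swp (i, j) = ((⟨(j:ℕ)+1, hb1⟩ : Fin (n+2)), (⟨(i:ℕ), hb2⟩ : Fin (n+1))) :=
        swp_neg i j h
      rw [e2] at h2
      rw [e, add_comm]
      exact h2
  have : ∑ p : Fin (n+2) × Fin (n+1), F p = 0 :=
    Finset.sum_ninvolution swp key (fun p _ => swp_ne p) (fun p => Finset.mem_univ _) swp_swp
  rw [← this, ← Finset.sum_product']
  rfl

section Aux2
variable {E : Type} [NormedAddCommGroup E] [NormedSpace ℝ E]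

lemma sndSymm (f : V3 → E) (hf : ContDiff ℝ (⊤ : ℕ∞) f) (x u v : V3) :
    fderiv ℝ (fun y => fderiv ℝ f y v) x u = fderiv ℝ (fun y => fderiv ℝ f y u) x v := by
  have hd : Differentiable ℝ (fderiv ℝ f) := (hf.fderiv_right (m := (⊤ : ℕ∞)) (by simp)).differentiable (by simp)
  have h1 : ∀ w : V3, fderiv ℝ (fun y => fderiv ℝ f y w) x
      = ((ContinuousLinearMap.apply ℝ E w).comp (fderiv ℝ (fderiv ℝ f) x)) := fun w =>
    ((ContinuousLinearMap.apply ℝ E w).hasFDerivAt.comp x (hd x).hasFDerivAt).fderiv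
  rw [h1, h1]
  simp only [ContinuousLinearMap.coe_comp', Function.comp_apply,
    ContinuousLinearMap.apply_apply]
  exact second_derivative_symmetric (fun y => (hf.differentiable (by simp) y).hasFDerivAt)
    (hd x).hasFDerivAt u v

lemma contDiff_fderiv_apply (f : V3 → E) (hf : ContDiff ℝ (⊤ : ℕ∞) f) (v : V3) :
    ContDiff ℝ (⊤ : ℕ∞) fun x => fderiv ℝ f x v :=
  (hf.fderiv_right (by simp)).clm_apply contDiff_const


end Aux2

section ExtLemmas

variable {E : Type} [NormedAddCommGroup E] [NormedSpace ℝ E]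

lemma extD_smooth {k : ℕ} (ω : Form k E) (hω : ∀ ξ, ContDiff ℝ (⊤ : ℕ∞) fun x => ω x ξ) :
    ∀ ξ, ContDiff ℝ (⊤ : ℕ∞) fun x => extD ω x ξ := by
  intro ξ
  unfold extD
  exact ContDiff.sum fun i _ => (contDiff_fderiv_apply _ (hω _) _).const_smul _

lemma extD_sub {k : ℕ} (A B : Form k E)
    (hA : ∀ ξ, Differentiable ℝ fun x => A x ξ)
    (hB : ∀ ξ, Differentiable ℝ fun x => B x ξ) (x : V3) (ξ : Fin (k+1) → V3) :
    extD (fun y η => A y η - B y η) x ξ = extD A x ξ - extD B x ξ := by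
  unfold extD
  rw [← Finset.sum_sub_distrib]
  refine Finset.sum_congr rfl fun i _ => ?_
  rw [← smul_sub]
  congr 1
  rw [fderiv_fun_sub (hA _ x) (hB _ x)]
  rfl

lemma extD_extD {k : ℕ} (ω : Form k E) (hω : ∀ ξ, ContDiff ℝ (⊤ : ℕ∞) fun x => ω x ξ)
    (x : V3) (ξ : Fin (k+2) → V3) : extD (extD ω) x ξ = 0 := by
  have expand : ∀ i : Fin (k+2),
      fderiv ℝ (fun y => extD ω y (fun j => ξ (i.succAbove j))) x (ξ i)
      = ∑ j : Fin (k+1), (-1:ℝ)^(j:ℕ) •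
          fderiv ℝ (fun y => fderiv ℝ
            (fun z => ω z (fun m => ξ (i.succAbove (j.succAbove m)))) y
            (ξ (i.succAbove j))) x (ξ i) := by
    intro i
    have hrw : (fun y => extD ω y (fun j => ξ (i.succAbove j)))
        = fun y => ∑ j : Fin (k+1), (-1:ℝ)^(j:ℕ) •
            fderiv ℝ (fun z => ω z (fun m => ξ (i.succAbove (j.succAbove m)))) y
              (ξ (i.succAbove j)) := rfl
    rw [hrw, fderiv_fun_sum (A := fun (j : Fin (k+1)) y => (-1:ℝ)^(j:ℕ) •
        fderiv ℝ (fun z => ω z (fun m => ξ (i.succAbove (j.succAbove m)))) y (ξ (i.succAbove j)))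
      (fun j _ =>
      ((contDiff_fderiv_apply _ (hω _) _).differentiable (by simp) x).const_smul _)]
    rw [ContinuousLinearMap.sum_apply]
    refine Finset.sum_congr rfl fun j _ => ?_
    rw [fderiv_fun_const_smul ((contDiff_fderiv_apply _ (hω _) _).differentiable (by simp) x)]
    rfl
  unfold extD
  calc ∑ i : Fin (k+2), (-1:ℝ)^(i:ℕ) •
        fderiv ℝ (fun y => extD ω y (fun j => ξ (i.succAbove j))) x (ξ i)
      = ∑ i : Fin (k+2), ∑ j : Fin (k+1), ((-1:ℝ)^((i:ℕ)+(j:ℕ))) •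
          fderiv ℝ (fun y => fderiv ℝ
            (fun z => ω z (fun m => ξ (i.succAbove (j.succAbove m)))) y
            (ξ (i.succAbove j))) x (ξ i) := by
        refine Finset.sum_congr rfl fun i _ => ?_
        rw [expand i, Finset.smul_sum]
        refine Finset.sum_congr rfl fun j _ => ?_
        rw [smul_smul, pow_add]
      _ = 0 := by
        refine double_sum_zero
          (G := fun r u v => fderiv ℝ (fun y => fderiv ℝ
            (fun z => ω z (fun m => ξ (r m))) y (ξ v)) x (ξ u)) ?_
        intro r u v
        exact sndSymm _ (hω _) x (ξ u) (ξ v)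

end ExtLemmas

theorem stmt17 (k : ℕ) (μ : Form k V3)
    (hμ : ∀ ξ i, ContDiff ℝ (⊤ : ℕ∞) fun x => μ x ξ i) (haμ : IsAlt μ) :
    (∀ x ξ, extD (Sop μ) x ξ + Sop (extD μ) x ξ = 0)
    ∧ (∀ ω : Form k M33, (∀ ξ i j, ContDiff ℝ (⊤ : ℕ∞) fun x => ω x ξ i j) → IsAlt ω →
        ∀ x ξ,
          extD (fun y η => extD ω y η - Sop μ y η) x ξ - Sop (extD μ) x ξ = 0
          ∧ extD (extD μ) x ξ = 0) := by
  have Smμ : ∀ ξ, ContDiff ℝ (⊤ : ℕ∞) fun x => μ x ξ := fun ξ => contDiff_pi.2 (hμ ξ)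
  have proj : ∀ i : Fin 3, ContDiff ℝ (⊤ : ℕ∞) fun x : V3 => x i := fun i =>
    (ContinuousLinearMap.proj (R := ℝ) (φ := fun _ : Fin 3 => ℝ) i).contDiff
  have Kop_smooth : ∀ {m : ℕ} (ν : Form m V3), (∀ ξ, ContDiff ℝ (⊤ : ℕ∞) fun x => ν x ξ) →
      ∀ ξ, ContDiff ℝ (⊤ : ℕ∞) fun x => Kop ν x ξ := by
    intro m ν hν ξ
    have hc : ∀ i, ContDiff ℝ (⊤ : ℕ∞) fun x => ν x ξ i := fun i => (contDiff_pi.1 (hν ξ)) i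
    refine contDiff_pi.2 fun i => contDiff_pi.2 fun j => ?_
    show ContDiff ℝ (⊤ : ℕ∞) fun x => x i * ν x ξ j - ν x ξ i * x j
    exact ((proj i).mul (hc j)).sub ((hc i).mul (proj j))
  have SmKμ := Kop_smooth μ Smμ
  have SmdKμ := extD_smooth _ SmKμ
  have Smdμ := extD_smooth _ Smμ
  have SmKdμ := Kop_smooth _ Smdμ
  have SmSμ : ∀ ξ, ContDiff ℝ (⊤ : ℕ∞) fun x => Sop μ x ξ := fun ξ => (SmdKμ ξ).sub (SmKdμ ξ)
  have part1 : ∀ x ξ, extD (Sop μ) x ξ + Sop (extD μ) x ξ = 0 := by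
    intro x ξ
    have h1 : extD (Sop μ) x ξ
        = extD (extD (Kop μ)) x ξ - extD (Kop (extD μ)) x ξ :=
      extD_sub _ _ (fun η => (SmdKμ η).differentiable (by simp))
        (fun η => (SmKdμ η).differentiable (by simp)) x ξ
    have h2 : extD (extD (Kop μ)) x ξ = 0 := extD_extD _ SmKμ x ξ
    have h4 : Kop (extD (extD μ)) x ξ = 0 := by
      have z := extD_extD μ Smμ x ξ
      show outer x (extD (extD μ) x ξ) - outer (extD (extD μ) x ξ) x = 0
      rw [z]
      funext i j
      simp [outer]
    have h3 : Sop (extD μ) x ξ = extD (Kop (extD μ)) x ξ - Kop (extD (extD μ)) x ξ := rfl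
    rw [h1, h2, h3, h4]
    abel
  refine ⟨part1, fun ω hω hωa x ξ => ?_⟩
  have Smω : ∀ ξ, ContDiff ℝ (⊤ : ℕ∞) fun x => ω x ξ := fun ξ =>
    contDiff_pi.2 fun i => contDiff_pi.2 fun j => hω ξ i j
  constructor
  · have h5 : extD (fun y η => extD ω y η - Sop μ y η) x ξ
        = extD (extD ω) x ξ - extD (Sop μ) x ξ :=
      extD_sub _ _ (fun η => ((extD_smooth _ Smω) η).differentiable (by simp))
        (fun η => (SmSμ η).differentiable (by simp)) x ξ
    rw [h5, extD_extD _ Smω x ξ, sub_sub, zero_sub, part1 x ξ, neg_zero]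
  · exact extD_extD μ Smμ x ξ
end
end
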